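/- arXiv:1109.3229 — 6 statements merged into one kernel-verified Lean document; each statement's English description precedes it below -/
import Mathlib

section
/- For any quaternion ξ, there exist infinitely many pairs of Hurwitz integers (p,q) with q ≠ 0 such that |ξ − p·q⁻¹|₂ < 2/|q|₂². -/
open MeasureTheory Metric Filter Set Quaternion

noncomputable instance : MeasurableSpace (Quaternion ℝ) := borel _
instance : BorelSpace (Quaternion ℝ) := ⟨rfl⟩

/-- Lebesgue measure on the quaternions, transported from `ℝ⁴`. -/
noncomputable instance : MeasureSpace (Quaternion ℝ) :=
  ⟨Measure.map (Quaternion.equivTuple ℝ).symm volume⟩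

/-- A quaternion is a Hurwitz integer if all its coordinates are integers or
all its coordinates are in `ℤ + 1/2`. -/
def IsHurwitz (x : Quaternion ℝ) : Prop :=
  (∃ a b c d : ℤ, x.re = a ∧ x.imI = b ∧ x.imJ = c ∧ x.imK = d) ∨
  (∃ a b c d : ℤ, x.re = a + 1/2 ∧ x.imI = b + 1/2 ∧ x.imJ = c + 1/2 ∧ x.imK = d + 1/2)

/-- The fundamental domain `Δ = [0,1)³ × [0,1/2)` for Hurwitz translations. -/
def fundDom : Set (Quaternion ℝ) :=
  {x | 0 ≤ x.re ∧ x.re < 1 ∧ 0 ≤ x.imI ∧ x.imI < 1 ∧ 0 ≤ x.imJ ∧ x.imJ < 1 ∧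
    0 ≤ x.imK ∧ x.imK < 1/2}

/-- The closed fundamental domain `Δ̄ = [0,1]³ × [0,1/2]`. -/
def fundDomCl : Set (Quaternion ℝ) :=
  {x | 0 ≤ x.re ∧ x.re ≤ 1 ∧ 0 ≤ x.imI ∧ x.imI ≤ 1 ∧ 0 ≤ x.imJ ∧ x.imJ ≤ 1 ∧
    0 ≤ x.imK ∧ x.imK ≤ 1/2}

/-!
Pigeonhole in volume. For `M ≥ 100`, translate `ξ q` into the fundamental domain `fundDom`
(volume `1/2`) for each of the `2 M⁴` Hurwitz integers `q` with coordinates in `[0, M)`. Balls of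
radius `1/(2M)` around these points have total volume `π²/16`, more than that of the
`1/(2M)`-neighbourhood of the domain, so two of them meet: some Hurwitz `p` and `q ≠ 0` satisfy
`‖q‖ ≤ 2M` and `‖ξ q - p‖ < 1/M`, whence `‖ξ - p q⁻¹‖ < 1/(M ‖q‖) ≤ 2/‖q‖²`.
Letting `M → ∞` gives approximants with arbitrarily small error, which is nonzero unless `ξ`
is itself a quotient `p q⁻¹`; in that case all pairs `(n p, n q)` qualify.
-/

namespace IsHurwitz

lemma zero : IsHurwitz 0 :=
  .inl ⟨0, 0, 0, 0, by simp, by simp, by simp, by simp⟩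

lemma sub {x y : ℍ[ℝ]} (hx : IsHurwitz x) (hy : IsHurwitz y) : IsHurwitz (x - y) := by
  obtain ⟨a, b, c, d, hx⟩ | ⟨a, b, c, d, hx⟩ := hx <;>
    obtain ⟨a', b', c', d', hy⟩ | ⟨a', b', c', d', hy⟩ := hy
  · exact .inl ⟨a - a', b - b', c - c', d - d', by simp [*]⟩
  · exact .inr ⟨a - a' - 1, b - b' - 1, c - c' - 1, d - d' - 1, by simp [*]; ring_nf; simp⟩
  · exact .inr ⟨a - a', b - b', c - c', d - d', by simp [*]; ring_nf; simp⟩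
  · exact .inl ⟨a - a', b - b', c - c', d - d', by simp [*]⟩

end IsHurwitz

def hurwitzAddSubgroup : AddSubgroup ℍ[ℝ] :=
  .ofSub {x | IsHurwitz x} ⟨0, .zero⟩ fun _ hx _ hy => hx.sub hy

lemma IsHurwitz.natCast_mul {x : ℍ[ℝ]} (hx : IsHurwitz x) (n : ℕ) : IsHurwitz (n * x) := by
  rw [← nsmul_eq_mul]
  exact hurwitzAddSubgroup.nsmul_mem hx n

lemma IsHurwitz.one_le_norm {x : ℍ[ℝ]} (hx : IsHurwitz x) (hx0 : x ≠ 0) : 1 ≤ ‖x‖ := by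
  suffices 1 ≤ normSq x by
    rw [normSq_eq_norm_mul_self] at this
    nlinarith [norm_nonneg x]
  obtain ⟨a, b, c, d, ha, hb, hc, hd⟩ | ⟨a, b, c, d, ha, hb, hc, hd⟩ := hx
  · have hpos : 0 < normSq x := normSq_nonneg.lt_of_ne' (normSq_ne_zero.2 hx0)
    rw [normSq_def', ha, hb, hc, hd] at hpos ⊢
    exact_mod_cast (show (0 : ℤ) < a ^ 2 + b ^ 2 + c ^ 2 + d ^ 2 by exact_mod_cast hpos)
  · -- `(z + 1/2)^2 = z (z + 1) + 1/4` and `z (z + 1) ≥ 0` for every integer `z`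
    have h (z : ℤ) : 0 ≤ (z : ℝ) * (z + 1) := by
      obtain hz | hz : 0 ≤ z ∨ z + 1 ≤ 0 := by omega
      all_goals exact_mod_cast (by nlinarith : 0 ≤ z * (z + 1))
    rw [normSq_def', ha, hb, hc, hd]
    nlinarith [h a, h b, h c, h d]

lemma Quaternion.norm_le_two_mul_of_abs_le {x : ℍ[ℝ]} {c : ℝ} (hre : |x.re| ≤ c)
    (hi : |x.imI| ≤ c) (hj : |x.imJ| ≤ c) (hk : |x.imK| ≤ c) : ‖x‖ ≤ 2 * c := by
  have hc : 0 ≤ c := (abs_nonneg _).trans hre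
  have hsq : normSq x ≤ (2 * c) ^ 2 := by
    rw [normSq_def']
    nlinarith [sq_le_sq' (abs_le.1 hre).1 (abs_le.1 hre).2,
      sq_le_sq' (abs_le.1 hi).1 (abs_le.1 hi).2, sq_le_sq' (abs_le.1 hj).1 (abs_le.1 hj).2,
      sq_le_sq' (abs_le.1 hk).1 (abs_le.1 hk).2]
  rw [normSq_eq_norm_mul_self] at hsq
  nlinarith [norm_nonneg x]

lemma Int.fract_sub_half_lt_half {t : ℝ} (ht : 1 / 2 ≤ Int.fract t) :
    Int.fract (t - 1 / 2) < 1 / 2 := by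
  have : Int.fract (t - 1 / 2) = Int.fract t - 1 / 2 := by
    rw [Int.fract_eq_iff]
    refine ⟨by linarith, by linarith [Int.fract_lt_one t], ⌊t⌋, ?_⟩
    rw [Int.fract]; ring
  linarith [Int.fract_lt_one t]

noncomputable def floorQ (x : ℍ[ℝ]) : ℍ[ℝ] := ⟨⌊x.re⌋, ⌊x.imI⌋, ⌊x.imJ⌋, ⌊x.imK⌋⟩

noncomputable def halfQ : ℍ[ℝ] := ⟨1 / 2, 1 / 2, 1 / 2, 1 / 2⟩

lemma isHurwitz_floorQ (x : ℍ[ℝ]) : IsHurwitz (floorQ x) :=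
  .inl ⟨_, _, _, _, rfl, rfl, rfl, rfl⟩

lemma isHurwitz_floorQ_add_halfQ (x : ℍ[ℝ]) : IsHurwitz (floorQ x + halfQ) :=
  .inr ⟨_, _, _, _, rfl, rfl, rfl, rfl⟩

lemma sub_floorQ_mem_fundDom {x : ℍ[ℝ]} (h : Int.fract x.imK < 1 / 2) :
    x - floorQ x ∈ fundDom := by
  simp only [← Int.self_sub_floor] at h
  exact ⟨Int.fract_nonneg _, Int.fract_lt_one _, Int.fract_nonneg _, Int.fract_lt_one _,
    Int.fract_nonneg _, Int.fract_lt_one _, Int.fract_nonneg _, h⟩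

noncomputable def hurwitzFloor (x : ℍ[ℝ]) : ℍ[ℝ] :=
  if Int.fract x.imK < 1 / 2 then floorQ x else floorQ (x - halfQ) + halfQ

lemma isHurwitz_hurwitzFloor (x : ℍ[ℝ]) : IsHurwitz (hurwitzFloor x) := by
  unfold hurwitzFloor
  split_ifs
  exacts [isHurwitz_floorQ x, isHurwitz_floorQ_add_halfQ _]

lemma sub_hurwitzFloor_mem_fundDom (x : ℍ[ℝ]) : x - hurwitzFloor x ∈ fundDom := by
  unfold hurwitzFloor
  split_ifs with h
  · exact sub_floorQ_mem_fundDom h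
  · rw [sub_add_eq_sub_sub_swap]
    exact sub_floorQ_mem_fundDom (x := x - halfQ) (Int.fract_sub_half_lt_half (not_lt.1 h))

section Grid

variable {M : ℕ}

noncomputable def gridCoord (e : Fin 2) (k : Fin M) : ℝ := ((2 * k + e : ℕ) : ℝ) / 2

lemma gridCoord_mem_Icc (e : Fin 2) (k : Fin M) : gridCoord e k ∈ Icc 0 (M : ℝ) := by
  refine ⟨by unfold gridCoord; positivity, ?_⟩
  rw [gridCoord, div_le_iff₀ two_pos]
  exact_mod_cast (by omega : 2 * (k : ℕ) + e ≤ M * 2)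

lemma gridCoord_inj {e e' : Fin 2} {k k' : Fin M} (h : gridCoord e k = gridCoord e' k') :
    e = e' ∧ k = k' := by
  have : 2 * (k : ℕ) + e = 2 * k' + e' := by
    exact_mod_cast (div_left_inj' two_ne_zero).1 h
  omega

/-- The `2 M⁴` Hurwitz integers with coordinates in `[0, M)`; the `Fin 2` component says whether
the coordinates are integers or half-integers. -/
noncomputable def hurwitzGridPoint (ev : Fin 2 × (Fin 4 → Fin M)) : ℍ[ℝ] :=
  ⟨gridCoord ev.1 (ev.2 0), gridCoord ev.1 (ev.2 1), gridCoord ev.1 (ev.2 2),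
    gridCoord ev.1 (ev.2 3)⟩

lemma isHurwitz_hurwitzGridPoint (ev : Fin 2 × (Fin 4 → Fin M)) :
    IsHurwitz (hurwitzGridPoint ev) := by
  obtain ⟨e, v⟩ := ev
  fin_cases e
  · exact .inl ⟨v 0, v 1, v 2, v 3, by simp [hurwitzGridPoint, gridCoord]⟩
  · exact .inr ⟨v 0, v 1, v 2, v 3, by simp [hurwitzGridPoint, gridCoord]; ring_nf; simp⟩

lemma hurwitzGridPoint_injective : Function.Injective (hurwitzGridPoint (M := M)) := by
  rintro ⟨e, v⟩ ⟨e', v'⟩ h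
  obtain ⟨h0, h1, h2, h3⟩ := QuaternionAlgebra.ext_iff.1 h
  refine Prod.ext (gridCoord_inj h0).1 (funext fun i => ?_)
  fin_cases i
  exacts [(gridCoord_inj h0).2, (gridCoord_inj h1).2, (gridCoord_inj h2).2, (gridCoord_inj h3).2]

lemma norm_hurwitzGridPoint_sub_le (ev ev' : Fin 2 × (Fin 4 → Fin M)) :
    ‖hurwitzGridPoint ev - hurwitzGridPoint ev'‖ ≤ 2 * M := by
  have h (i : Fin 4) : |gridCoord ev.1 (ev.2 i) - gridCoord ev'.1 (ev'.2 i)| ≤ M :=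
    abs_sub_le_of_nonneg_of_le (gridCoord_mem_Icc _ _).1 (gridCoord_mem_Icc _ _).2
      (gridCoord_mem_Icc _ _).1 (gridCoord_mem_Icc _ _).2
  exact Quaternion.norm_le_two_mul_of_abs_le (h 0) (h 1) (h 2) (h 3)

end Grid

theorem exists_ne_dist_lt_of_measure_lt {E ι : Type*} [NormedAddCommGroup E] [MeasurableSpace E]
    [BorelSpace E] (μ : Measure E) [μ.IsAddHaarMeasure] [Fintype ι] (x : ι → E) {r : ℝ}
    {D : Set E} (hD : ∀ i, ball (x i) r ⊆ D) (hμ : μ D < Fintype.card ι * μ (ball 0 r)) :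
    ∃ i j, i ≠ j ∧ dist (x i) (x j) < 2 * r := by
  have hsum : ∑ i, μ.restrict D (ball (x i) r) = Fintype.card ι * μ (ball 0 r) := by
    simp [Measure.restrict_eq_self _ (hD _), Measure.addHaar_ball_center]
  obtain ⟨i, -, j, -, hij, z, hzi, hzj⟩ :=
    exists_nonempty_inter_of_measure_univ_lt_sum_measure (μ.restrict D) (s := Finset.univ)
      (fun i _ => measurableSet_ball.nullMeasurableSet) (by rwa [hsum, Measure.restrict_apply_univ])
  exact ⟨i, j, hij,
    by linarith [dist_triangle_right (x i) (x j) z, mem_ball'.1 hzi, mem_ball'.1 hzj]⟩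

lemma EuclideanSpace.volume_ball_fin_four (x : EuclideanSpace ℝ (Fin 4)) {r : ℝ} (hr : 0 ≤ r) :
    volume (ball x r) = ENNReal.ofReal (Real.pi ^ 2 / 2 * r ^ 4) := by
  rw [EuclideanSpace.volume_ball, Fintype.card_fin, ← ENNReal.ofReal_pow hr,
    ← ENNReal.ofReal_mul (by positivity), mul_comm]
  congr 2
  rw [show ((4 : ℕ) : ℝ) / 2 + 1 = (2 : ℕ) + 1 by norm_num, Real.Gamma_nat_eq_factorial,
    show √Real.pi ^ 4 = (√Real.pi ^ 2) ^ 2 by ring, Real.sq_sqrt Real.pi_nonneg]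
  norm_num

/-- The closed `r`-neighbourhood of `fundDomCl` in the sup norm, as a subset of `ℝ⁴`. -/
def inflatedBox (r : ℝ) : Set (EuclideanSpace ℝ (Fin 4)) :=
  WithLp.ofLp ⁻¹' univ.pi fun i => Icc (-r) (![1, 1, 1, 1 / 2] i + r)

lemma volume_inflatedBox {r : ℝ} (hr : 0 ≤ r) :
    volume (inflatedBox r) = ENNReal.ofReal ((1 + 2 * r) ^ 3 * (1 / 2 + 2 * r)) := by
  rw [inflatedBox, (PiLp.volume_preserving_ofLp _).measure_preimage
    (MeasurableSet.univ_pi fun _ => measurableSet_Icc).nullMeasurableSet, volume_pi_pi]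
  simp only [Real.volume_Icc, Fin.prod_univ_four]
  rw [ENNReal.ofReal_mul (by positivity), ENNReal.ofReal_pow (by positivity)]
  simp only [Matrix.cons_val, sub_neg_eq_add]
  ring_nf

lemma ball_subset_inflatedBox {w : ℍ[ℝ]} (hw : w ∈ fundDom) (r : ℝ) :
    ball (linearIsometryEquivTuple w) r ⊆ inflatedBox r := by
  intro y hy
  obtain ⟨h0, h0', h1, h1', h2, h2', h3, h3'⟩ := hw
  simp only [inflatedBox, mem_preimage, mem_univ_pi, mem_Icc]
  intro i
  have hi : |y i - linearIsometryEquivTuple w i| < r :=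
    (PiLp.norm_apply_le (y - linearIsometryEquivTuple w) i).trans_lt (mem_ball_iff_norm.1 hy)
  rw [abs_lt] at hi
  fin_cases i <;> simp at hi ⊢ <;> constructor <;> linarith

lemma volume_inflatedBox_lt {r : ℝ} (hr : 0 ≤ r) (hr' : r ≤ 1 / 200) :
    volume (inflatedBox r) < ENNReal.ofReal (Real.pi ^ 2 / 16) := by
  rw [volume_inflatedBox hr, ENNReal.ofReal_lt_ofReal_iff (by positivity)]
  have h3 : (1 + 2 * r) ^ 3 ≤ (1 + 1 / 100) ^ 3 := by gcongr; linarith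
  have hpi : 3 ^ 2 < Real.pi ^ 2 := by gcongr; exact Real.pi_gt_three
  nlinarith

theorem exists_hurwitz_norm_mul_sub_lt (ξ : ℍ[ℝ]) {M : ℕ} (hM : 100 ≤ M) :
    ∃ p q, IsHurwitz p ∧ IsHurwitz q ∧ q ≠ 0 ∧ ‖q‖ ≤ 2 * M ∧ ‖ξ * q - p‖ < 1 / M := by
  have hM' : (100 : ℝ) ≤ M := by exact_mod_cast hM
  set r : ℝ := 1 / (2 * M) with hr
  set g := hurwitzGridPoint (M := M)
  set F := fun ev => hurwitzFloor (ξ * g ev)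
  -- `2 M⁴` Hurwitz points, each carrying a ball of volume `π² r⁴ / 2 = π² / (32 M⁴)`
  have hcard : (Fintype.card (Fin 2 × (Fin 4 → Fin M)) : ENNReal) *
      volume (ball (0 : EuclideanSpace ℝ (Fin 4)) r) = ENNReal.ofReal (Real.pi ^ 2 / 16) := by
    rw [EuclideanSpace.volume_ball_fin_four _ (by positivity), ← ENNReal.ofReal_natCast,
      ← ENNReal.ofReal_mul (by positivity)]
    congr 1
    simp only [Fintype.card_prod, Fintype.card_fun, Fintype.card_fin, hr]
    field_simp
    push_cast
    ring
  obtain ⟨i, j, hij, hdist⟩ := exists_ne_dist_lt_of_measure_lt volume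
    (fun ev => linearIsometryEquivTuple (ξ * g ev - F ev))
    (fun ev => ball_subset_inflatedBox (sub_hurwitzFloor_mem_fundDom _) r)
    (hcard ▸ volume_inflatedBox_lt (by positivity) (by rw [hr, div_le_div_iff₀] <;> linarith))
  refine ⟨F i - F j, g i - g j, (isHurwitz_hurwitzFloor _).sub (isHurwitz_hurwitzFloor _),
    (isHurwitz_hurwitzGridPoint i).sub (isHurwitz_hurwitzGridPoint j),
    sub_ne_zero.2 (hurwitzGridPoint_injective.ne hij), norm_hurwitzGridPoint_sub_le i j, ?_⟩
  rw [LinearIsometryEquiv.dist_map, dist_eq_norm] at hdist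
  calc ‖ξ * (g i - g j) - (F i - F j)‖ = ‖(ξ * g i - F i) - (ξ * g j - F j)‖ := by
        rw [mul_sub, sub_sub_sub_comm]
    _ < 2 * r := hdist
    _ = 1 / M := by rw [hr]; field_simp

lemma Quaternion.norm_sub_mul_inv {ξ p q : ℍ[ℝ]} (hq : q ≠ 0) :
    ‖ξ - p * q⁻¹‖ = ‖ξ * q - p‖ / ‖q‖ := by
  rw [div_eq_mul_inv, ← norm_inv, ← norm_mul, sub_mul, mul_assoc, mul_inv_cancel₀ hq, mul_one]

def hurwitzApproximants (ξ : ℍ[ℝ]) : Set (ℍ[ℝ] × ℍ[ℝ]) :=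
  {pq | IsHurwitz pq.1 ∧ IsHurwitz pq.2 ∧ pq.2 ≠ 0 ∧ ‖ξ - pq.1 * pq.2⁻¹‖ < 2 / ‖pq.2‖ ^ 2}

theorem exists_mem_hurwitzApproximants_lt (ξ : ℍ[ℝ]) {ε : ℝ} (hε : 0 < ε) :
    ∃ pq ∈ hurwitzApproximants ξ, ‖ξ - pq.1 * pq.2⁻¹‖ < ε := by
  obtain ⟨M, hM⟩ := exists_nat_gt (max 100 (1 / ε))
  obtain ⟨p, q, hp, hq, hq0, hqM, hlt⟩ :=
    exists_hurwitz_norm_mul_sub_lt ξ (M := M) (by exact_mod_cast (le_max_left _ _).trans hM.le)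
  have hM0 : (0 : ℝ) < M := by linarith [le_max_left (100 : ℝ) (1 / ε)]
  have hq1 : 1 ≤ ‖q‖ := hq.one_le_norm hq0
  have herr : ‖ξ - p * q⁻¹‖ < 1 / (M * ‖q‖) := by
    rw [Quaternion.norm_sub_mul_inv hq0, ← div_div]
    exact div_lt_div_of_pos_right hlt (by positivity)
  refine ⟨(p, q), ⟨hp, hq, hq0, herr.trans_le ?_⟩, herr.trans_le ?_⟩
  · rw [div_le_div_iff₀ (by positivity) (by positivity)]
    nlinarith
  · rw [div_le_iff₀ (by positivity)]
    have hMε : 1 / ε < M := (le_max_right _ _).trans_lt hM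
    rw [div_lt_iff₀ hε] at hMε
    nlinarith

theorem Set.infinite_of_forall_exists_apply_lt {α β : Type*} [LinearOrder β] [NoMaxOrder β]
    {s : Set α} (f : α → β) {b : β} (hgt : ∀ x ∈ s, b < f x)
    (hlt : ∀ c, b < c → ∃ x ∈ s, f x < c) : s.Infinite := by
  intro hs
  obtain ⟨c, hc⟩ := exists_gt b
  obtain ⟨x, hx, -⟩ := hlt c hc
  obtain ⟨a, ha, hmin⟩ := Set.exists_min_image s f hs ⟨x, hx⟩
  obtain ⟨y, hy, hya⟩ := hlt (f a) (hgt a ha)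
  exact (hmin y hy).not_gt hya

theorem hurwitzApproximants_infinite_of_eq_mul_inv {ξ p q : ℍ[ℝ]} (hp : IsHurwitz p)
    (hq : IsHurwitz q) (hq0 : q ≠ 0) (hξ : ξ = p * q⁻¹) : (hurwitzApproximants ξ).Infinite := by
  have hn (n : ℕ) : ((n + 1 : ℕ) : ℍ[ℝ]) ≠ 0 := fun h =>
    (n.cast_add_one_pos (α := ℝ)).ne' (by simpa using congrArg QuaternionAlgebra.re h)
  refine Set.infinite_of_injective_forall_mem
    (f := fun n : ℕ => (((n + 1 : ℕ) : ℍ[ℝ]) * p, ((n + 1 : ℕ) : ℍ[ℝ]) * q)) ?_ fun n => ?_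
  · intro m n h
    have h' := mul_right_cancel₀ hq0 (congrArg Prod.snd h)
    simpa using congrArg QuaternionAlgebra.re h'
  · have hnq : ((n + 1 : ℕ) : ℍ[ℝ]) * q ≠ 0 := mul_ne_zero (hn n) hq0
    refine ⟨hp.natCast_mul _, hq.natCast_mul _, hnq, ?_⟩
    have : ((n + 1 : ℕ) : ℍ[ℝ]) * p * (((n + 1 : ℕ) : ℍ[ℝ]) * q)⁻¹ = ξ := by
      rw [mul_inv_rev, ← mul_assoc, mul_assoc _ p, Nat.cast_comm, mul_assoc,
        mul_inv_cancel₀ (hn n), mul_one, hξ]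
    simp only [this, sub_self, norm_zero]
    exact div_pos two_pos (pow_pos (norm_pos_iff.2 hnq) 2)

/-- Dirichlet's theorem for quaternions: infinitely many good approximants. -/
theorem quaternionic_dirichlet_infinite (ξ : Quaternion ℝ) :
    {pq : Quaternion ℝ × Quaternion ℝ | IsHurwitz pq.1 ∧ IsHurwitz pq.2 ∧ pq.2 ≠ 0 ∧
      ‖ξ - pq.1 * pq.2⁻¹‖ < 2 / ‖pq.2‖ ^ 2}.Infinite := by
  by_cases hrat : ∃ p q, IsHurwitz p ∧ IsHurwitz q ∧ q ≠ 0 ∧ ξ = p * q⁻¹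
  · obtain ⟨p, q, hp, hq, hq0, hξ⟩ := hrat
    exact hurwitzApproximants_infinite_of_eq_mul_inv hp hq hq0 hξ
  · push Not at hrat
    refine Set.infinite_of_forall_exists_apply_lt (fun pq => ‖ξ - pq.1 * pq.2⁻¹‖)
      (fun pq hpq => ?_) fun ε hε => exists_mem_hurwitzApproximants_lt ξ hε
    exact norm_pos_iff.2 (sub_ne_zero.2 (hrat _ _ hpq.1 hpq.2.1 hpq.2.2.1))
end

section
/- The number of Hurwitz integers p such that p·q⁻¹ lies in the closure of the fundamental domain Δ = [0,1)³ × [0,1/2) is asymptotic to |q|₂⁴; in particular it is bounded above and below by positive constant multiples of |q|₂⁴ for all nonzero Hurwitz integers q with |q|₂ sufficiently large. -/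
open MeasureTheory Metric Filter Set Quaternion

/-!
The translates `p + Δ`, `p` Hurwitz, tile `ℍ` with volume `1/2` each. Right multiplication
by `q⁻¹` has determinant `‖q‖⁻⁴`, and it moves every point of `p + Δ` to within `2 / ‖q‖` of
`p q⁻¹` because `Δ` lies in the ball of radius `2`. So the images of the tiles of the `N`
counted points are disjoint, lie in `Δ̄` enlarged by `2 / ‖q‖` on every side, and cover `Δ̄`
shrunk by `2 / ‖q‖`. Comparing volumes gives `(r - 4)³ (r - 8) ≤ N ≤ (r + 4)³ (r + 8)` for
`r = ‖q‖ ≥ 8`, hence `|N - r⁴| ≤ 48 r³`.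
-/

open scoped Pointwise ENNReal

theorem Set.finite_and_ncard_le_of_forall_finset_card_le {α : Type*} {S : Set α} {U : ℝ}
    (h : ∀ s : Finset α, ↑s ⊆ S → (s.card : ℝ) ≤ U) : S.Finite ∧ (S.ncard : ℝ) ≤ U := by
  have hfin : S.Finite := by
    by_contra hinf
    obtain ⟨s, hs, hcard⟩ := Set.Infinite.exists_subset_card_eq hinf (⌊U⌋₊ + 1)
    have := h s hs
    rw [hcard, Nat.cast_add_one] at this
    linarith [Nat.lt_floor_add_one U]
  refine ⟨hfin, ?_⟩
  rw [Set.ncard_eq_toFinset_card S hfin]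
  exact h _ (by simp)

namespace MeasureTheory

variable {α ι : Type*} [MeasurableSpace α] {μ : Measure α} {s : Finset ι} {T : ι → Set α}
  {U : Set α} {m : ℝ≥0∞}

theorem card_mul_le_measure_of_pairwiseDisjoint (hd : (s : Set ι).PairwiseDisjoint T)
    (hT : ∀ i ∈ s, MeasurableSet (T i)) (hm : ∀ i ∈ s, μ (T i) = m) (hU : ∀ i ∈ s, T i ⊆ U) :
    s.card * m ≤ μ U :=
  calc s.card * m = ∑ i ∈ s, μ (T i) := by simp [Finset.sum_congr rfl hm]
    _ = μ (⋃ i ∈ s, T i) := (measure_biUnion_finset hd hT).symm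
    _ ≤ μ U := measure_mono (Set.iUnion₂_subset hU)

theorem measure_le_card_mul_of_subset_biUnion (hm : ∀ i ∈ s, μ (T i) ≤ m)
    (hU : U ⊆ ⋃ i ∈ s, T i) : μ U ≤ s.card * m :=
  calc μ U ≤ μ (⋃ i ∈ s, T i) := measure_mono hU
    _ ≤ ∑ i ∈ s, μ (T i) := measure_biUnion_finset_le s T
    _ ≤ ∑ _i ∈ s, m := Finset.sum_le_sum hm
    _ = s.card * m := by simp

end MeasureTheory

namespace Quaternion

noncomputable def continuousLinearEquivTuple : ℍ ≃L[ℝ] (Fin 4 → ℝ) :=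
  LinearEquiv.toContinuousLinearEquiv (QuaternionAlgebra.linearEquivTuple (-1 : ℝ) 0 (-1))

theorem measurePreserving_equivTuple :
    MeasurePreserving (equivTuple ℝ) (volume : Measure ℍ) volume :=
  continuousLinearEquivTuple.toHomeomorph.toMeasurableEquiv.symm.measurePreserving_symm volume

instance : (volume : Measure ℍ).IsAddHaarMeasure :=
  continuousLinearEquivTuple.symm.isAddHaarMeasure_map volume

theorem det_mulRight (q : ℍ) : LinearMap.det (LinearMap.mulRight ℝ q) = normSq q ^ 2 := by
  let e : ℍ ≃ₗ[ℝ] (Fin 4 → ℝ) := QuaternionAlgebra.linearEquivTuple (-1 : ℝ) 0 (-1)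
  have hM : LinearMap.toMatrix' (e ∘ₗ LinearMap.mulRight ℝ q ∘ₗ e.symm) =
      !![q.re, -q.imI, -q.imJ, -q.imK;
         q.imI, q.re, q.imK, -q.imJ;
         q.imJ, -q.imK, q.re, q.imI;
         q.imK, q.imJ, -q.imI, q.re] := by
    have h (v : Fin 4 → ℝ) : (e ∘ₗ LinearMap.mulRight ℝ q ∘ₗ e.symm) v =
        equivTuple ℝ ((equivTuple ℝ).symm v * q) := rfl
    ext i j
    rw [LinearMap.toMatrix'_apply, h, equivTuple_apply]
    simp only [re_mul, imI_mul, imJ_mul, imK_mul]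
    fin_cases i <;> fin_cases j <;> simp
  rw [← LinearMap.det_conj _ e, ← LinearMap.det_toMatrix', hM, Matrix.det_succ_row_zero]
  simp [Fin.sum_univ_succ, Matrix.det_fin_three, normSq_def', Fin.succAbove]
  ring

theorem volume_image_mul_right (q : ℍ) (s : Set ℍ) :
    volume ((· * q) '' s) = ENNReal.ofReal (‖q‖ ^ 4) * volume s := by
  rw [show (· * q) = ⇑(LinearMap.mulRight ℝ q) from rfl, Measure.addHaar_image_linearMap,
    det_mulRight, normSq_eq_norm_mul_self]
  congr 2
  rw [abs_of_nonneg (by positivity)]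
  ring

theorem volume_preimage_mul_right_inv {q : ℍ} (hq : q ≠ 0) (s : Set ℍ) :
    volume ((· * q⁻¹) ⁻¹' s) = ENNReal.ofReal (‖q‖ ^ 4) * volume s := by
  rw [← Set.image_eq_preimage_of_inverse (g := (· * q⁻¹))
    (fun x => mul_inv_cancel_right₀ hq x) (fun x => inv_mul_cancel_right₀ hq x),
    volume_image_mul_right]

theorem abs_equivTuple_apply_le_norm (x : ℍ) (i : Fin 4) : |equivTuple ℝ x i| ≤ ‖x‖ := by
  rw [← norm_toLp_equivTuple, ← Real.norm_eq_abs]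
  exact PiLp.norm_apply_le (WithLp.toLp 2 (equivTuple ℝ x)) i

end Quaternion

open Quaternion

theorem fundDom_eq_preimage_pi :
    fundDom = equivTuple ℝ ⁻¹' Set.univ.pi fun i => Ico 0 (![1, 1, 1, 1/2] i) := by
  ext x
  simp [fundDom, Fin.forall_fin_succ, and_assoc]

theorem measurableSet_fundDom : MeasurableSet fundDom := by
  rw [fundDom_eq_preimage_pi]
  exact measurePreserving_equivTuple.measurable
    (MeasurableSet.univ_pi fun _ => measurableSet_Ico)

theorem volume_fundDom : volume fundDom = ENNReal.ofReal (1/2) := by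
  rw [fundDom_eq_preimage_pi, measurePreserving_equivTuple.measure_preimage
    (MeasurableSet.univ_pi fun _ => measurableSet_Ico).nullMeasurableSet, Real.volume_pi_Ico]
  simp [Fin.prod_univ_four]

theorem volume_setOf_sub_mem (p : ℍ) (A : Set ℍ) : volume {y | y - p ∈ A} = volume A := by
  simp_rw [sub_eq_add_neg]
  exact measure_preimage_add_right volume (-p) A

theorem norm_le_two_of_mem_fundDom {d : ℍ} (hd : d ∈ fundDom) : ‖d‖ ≤ 2 := by
  obtain ⟨h0, h1, h2, h3, h4, h5, h6, h7⟩ := hd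
  have hsq : ‖d‖ * ‖d‖ ≤ 2 * 2 := by
    rw [← normSq_eq_norm_mul_self, normSq_def']
    nlinarith
  nlinarith [norm_nonneg d]

theorem norm_mul_inv_le_of_mem_fundDom {d : ℍ} (hd : d ∈ fundDom) (q : ℍ) :
    ‖d * q⁻¹‖ ≤ 2 / ‖q‖ := by
  rw [norm_mul, norm_inv, div_eq_mul_inv]
  gcongr
  exact norm_le_two_of_mem_fundDom hd

theorem exists_isHurwitz_sub_mem_fundDom (x : ℍ) : ∃ h, IsHurwitz h ∧ x - h ∈ fundDom := by
  have floor_le (t s : ℝ) : 0 ≤ t - (⌊t - s⌋ + s) := by linarith [Int.floor_le (t - s)]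
  have lt_floor (t s : ℝ) : t - (⌊t - s⌋ + s) < 1 := by linarith [Int.lt_floor_add_one (t - s)]
  -- round down into `ℤ⁴` or into `(ℤ + 1/2)⁴`, whichever leaves `imK` below `1/2`
  by_cases hK : x.imK - ⌊x.imK⌋ < 1/2
  · refine ⟨⟨⌊x.re⌋, ⌊x.imI⌋, ⌊x.imJ⌋, ⌊x.imK⌋⟩, Or.inl ⟨_, _, _, _, rfl, rfl, rfl, rfl⟩, ?_⟩
    exact ⟨Int.fract_nonneg _, Int.fract_lt_one _, Int.fract_nonneg _, Int.fract_lt_one _,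
      Int.fract_nonneg _, Int.fract_lt_one _, Int.fract_nonneg _, hK⟩
  · refine ⟨⟨⌊x.re - 1/2⌋ + 1/2, ⌊x.imI - 1/2⌋ + 1/2, ⌊x.imJ - 1/2⌋ + 1/2, ⌊x.imK - 1/2⌋ + 1/2⟩,
      Or.inr ⟨_, _, _, _, rfl, rfl, rfl, rfl⟩, ?_⟩
    have : (⌊x.imK⌋ : ℝ) ≤ ⌊x.imK - 1/2⌋ := Int.cast_le.2 (Int.le_floor.2 (by linarith))
    refine ⟨floor_le _ _, lt_floor _ _, floor_le _ _, lt_floor _ _, floor_le _ _, lt_floor _ _,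
      floor_le _ _, ?_⟩
    show x.imK - (⌊x.imK - 1/2⌋ + 1/2) < 1/2
    linarith [Int.lt_floor_add_one x.imK]

theorem IsHurwitz.eq_of_sub_mem_fundDom {x h₁ h₂ : ℍ} (H₁ : IsHurwitz h₁) (H₂ : IsHurwitz h₂)
    (m₁ : x - h₁ ∈ fundDom) (m₂ : x - h₂ ∈ fundDom) : h₁ = h₂ := by
  have int_eq {m n : ℤ} (h₁ : (m : ℝ) < n + 1) (h₂ : (n : ℝ) < m + 1) : m = n := by
    have : m < n + 1 := by exact_mod_cast h₁
    have : n < m + 1 := by exact_mod_cast h₂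
    omega
  obtain ⟨p0, p1, p2, p3, p4, p5, p6, p7⟩ := m₁
  obtain ⟨r0, r1, r2, r3, r4, r5, r6, r7⟩ := m₂
  simp only [re_sub, imI_sub, imJ_sub, imK_sub] at *
  rcases H₁ with ⟨a₁, b₁, c₁, d₁, e₁, e₂, e₃, e₄⟩ | ⟨a₁, b₁, c₁, d₁, e₁, e₂, e₃, e₄⟩ <;>
    rcases H₂ with ⟨a₂, b₂, c₂, d₂, f₁, f₂, f₃, f₄⟩ | ⟨a₂, b₂, c₂, d₂, f₁, f₂, f₃, f₄⟩ <;>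
    obtain rfl : d₁ = d₂ := int_eq (by linarith) (by linarith)
  · obtain ⟨rfl, rfl, rfl⟩ : a₁ = a₂ ∧ b₁ = b₂ ∧ c₁ = c₂ :=
      ⟨int_eq (by linarith) (by linarith), int_eq (by linarith) (by linarith),
        int_eq (by linarith) (by linarith)⟩
    ext <;> linarith
  -- with mixed parities `x.imK` would lie in both halves of `[d₁, d₁ + 1)`
  · linarith
  · linarith
  · obtain ⟨rfl, rfl, rfl⟩ : a₁ = a₂ ∧ b₁ = b₂ ∧ c₁ = c₂ :=
      ⟨int_eq (by linarith) (by linarith), int_eq (by linarith) (by linarith),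
        int_eq (by linarith) (by linarith)⟩
    ext <;> linarith

theorem card_mul_volume_fundDom_le {q : ℍ} {B : Set ℍ} {s : Finset ℍ}
    (hs : ↑s ⊆ {p | IsHurwitz p ∧ p * q⁻¹ ∈ B}) :
    s.card * volume fundDom ≤ volume ((· * q⁻¹) ⁻¹' (B + closedBall 0 (2 / ‖q‖))) := by
  refine card_mul_le_measure_of_pairwiseDisjoint (T := fun p => {y | y - p ∈ fundDom})
    (fun p₁ h₁ p₂ h₂ hne => Set.disjoint_left.2 fun y hy₁ hy₂ => hne ?_)
    (fun p _ => measurableSet_fundDom.preimage (measurable_id.sub_const p))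
    (fun p _ => volume_setOf_sub_mem p fundDom) (fun p hp y hy => ?_)
  · exact (hs h₁).1.eq_of_sub_mem_fundDom (hs h₂).1 hy₁ hy₂
  · refine ⟨p * q⁻¹, (hs hp).2, (y - p) * q⁻¹, ?_, by simp [sub_mul]⟩
    simpa using norm_mul_inv_le_of_mem_fundDom hy q

theorem volume_le_ncard_mul_volume_fundDom {q : ℍ} {B : Set ℍ}
    (hB : {p | IsHurwitz p ∧ p * q⁻¹ ∈ B}.Finite) :
    volume ((· * q⁻¹) ⁻¹' {x | closedBall x (2 / ‖q‖) ⊆ B}) ≤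
      {p | IsHurwitz p ∧ p * q⁻¹ ∈ B}.ncard * volume fundDom := by
  rw [Set.ncard_eq_toFinset_card _ hB]
  refine measure_le_card_mul_of_subset_biUnion (T := fun p => {y | y - p ∈ fundDom})
    (fun p _ => (volume_setOf_sub_mem p fundDom).le) fun y hy => ?_
  obtain ⟨h, hh, hyh⟩ := exists_isHurwitz_sub_mem_fundDom y
  have hhq : h * q⁻¹ ∈ B := hy <| by
    rw [mem_closedBall, dist_eq_norm, ← sub_mul, ← norm_neg, ← neg_mul, neg_sub]
    exact norm_mul_inv_le_of_mem_fundDom hyh q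
  exact Set.mem_biUnion (hB.mem_toFinset.2 ⟨hh, hhq⟩) hyh

/-- Negative `δ` shrinks `Δ̄`. -/
def enlargedFundDomCl (δ : ℝ) : Set ℍ :=
  equivTuple ℝ ⁻¹' Icc (fun _ => -δ) (![1, 1, 1, 1/2] + fun _ => δ)

theorem enlargedFundDomCl_zero : enlargedFundDomCl 0 = fundDomCl := by
  ext x
  simp only [enlargedFundDomCl, neg_zero, ← Pi.zero_def, add_zero]
  simp [fundDomCl, Pi.le_def, Fin.forall_fin_succ]
  tauto

theorem add_mem_enlargedFundDomCl {δ ε : ℝ} {x y : ℍ} (hx : x ∈ enlargedFundDomCl δ)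
    (hy : ‖y‖ ≤ ε) : x + y ∈ enlargedFundDomCl (δ + ε) := by
  obtain ⟨hlo, hhi⟩ := hx
  refine ⟨fun i => ?_, fun i => ?_⟩ <;>
  · have := abs_le.1 ((abs_equivTuple_apply_le_norm y i).trans hy)
    have := hlo i
    have := hhi i
    have hadd : equivTuple ℝ (x + y) i = equivTuple ℝ x i + equivTuple ℝ y i := by
      fin_cases i <;> rfl
    simp only [Pi.add_apply] at *
    linarith

theorem volume_enlargedFundDomCl {δ : ℝ} (hδ : -1/4 ≤ δ) :
    volume (enlargedFundDomCl δ) = ENNReal.ofReal ((1 + 2 * δ) ^ 3 * (1/2 + 2 * δ)) := by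
  rw [enlargedFundDomCl, measurePreserving_equivTuple.measure_preimage
    measurableSet_Icc.nullMeasurableSet, Real.volume_Icc_pi]
  have h1 : 0 ≤ 1 + 2 * δ := by linarith
  have h2 : 0 ≤ 1/2 + 2 * δ := by linarith
  simp only [Fin.prod_univ_four, Pi.add_apply, Matrix.cons_val, sub_neg_eq_add]
  rw [show (1 : ℝ) + δ + δ = 1 + 2 * δ by ring, show (1/2 : ℝ) + δ + δ = 1/2 + 2 * δ by ring,
    ← ENNReal.ofReal_mul h1, ← ENNReal.ofReal_mul (by positivity),
    ← ENNReal.ofReal_mul (by positivity)]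
  congr 1
  ring

theorem add_closedBall_subset_enlargedFundDomCl (δ ε : ℝ) :
    enlargedFundDomCl δ + closedBall 0 ε ⊆ enlargedFundDomCl (δ + ε) := by
  rintro _ ⟨x, hx, y, hy, rfl⟩
  exact add_mem_enlargedFundDomCl hx (mem_closedBall_zero_iff.1 hy)

theorem enlargedFundDomCl_sub_subset (δ ε : ℝ) :
    enlargedFundDomCl (δ - ε) ⊆ {x | closedBall x ε ⊆ enlargedFundDomCl δ} := by
  intro x hx y hy
  simpa using add_mem_enlargedFundDomCl hx (y := y - x) (mem_closedBall_iff_norm.1 hy)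

theorem ncard_hurwitz_mem_fundDomCl_bounds {q : ℍ} (hq : 8 ≤ ‖q‖) :
    (‖q‖ - 4) ^ 3 * (‖q‖ - 8) ≤ ({p | IsHurwitz p ∧ p * q⁻¹ ∈ fundDomCl}.ncard : ℝ) ∧
      ({p | IsHurwitz p ∧ p * q⁻¹ ∈ fundDomCl}.ncard : ℝ) ≤ (‖q‖ + 4) ^ 3 * (‖q‖ + 8) := by
  set r := ‖q‖
  have hr : 0 < r := by linarith
  have hq0 : q ≠ 0 := norm_pos_iff.1 hr
  have hδ₀ : 0 < 2 / r := by positivity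
  have hδ₁ : 2 / r ≤ 1/4 := by rw [div_le_iff₀ hr]; linarith
  have volume_preimage (δ : ℝ) (hδ : -1/4 ≤ δ) :
      volume ((· * q⁻¹) ⁻¹' enlargedFundDomCl δ) =
        ENNReal.ofReal (r ^ 4 * ((1 + 2 * δ) ^ 3 * (1/2 + 2 * δ))) := by
    rw [volume_preimage_mul_right_inv hq0, volume_enlargedFundDomCl hδ,
      ← ENNReal.ofReal_mul (by positivity)]
  have card_mul_half (n : ℕ) : (n : ℝ≥0∞) * volume fundDom = ENNReal.ofReal (n * (1/2)) := by
    rw [volume_fundDom, ENNReal.ofReal_mul (by positivity), ENNReal.ofReal_natCast]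
  rw [← enlargedFundDomCl_zero]
  obtain ⟨hfin, hupper⟩ := Set.finite_and_ncard_le_of_forall_finset_card_le
    (S := {p | IsHurwitz p ∧ p * q⁻¹ ∈ enlargedFundDomCl 0}) (U := (r + 4) ^ 3 * (r + 8))
    fun s hs => by
      have := (card_mul_volume_fundDom_le hs).trans (measure_mono (Set.preimage_mono
        (add_closedBall_subset_enlargedFundDomCl 0 (2 / r))))
      rw [card_mul_half, volume_preimage _ (by linarith),
        ENNReal.ofReal_le_ofReal_iff (by positivity)] at this
      field_simp at this
      linarith
  refine ⟨?_, hupper⟩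
  have := (measure_mono (Set.preimage_mono (enlargedFundDomCl_sub_subset 0 (2 / r)))).trans
    (volume_le_ncard_mul_volume_fundDom hfin)
  rw [card_mul_half, volume_preimage _ (by linarith),
    ENNReal.ofReal_le_ofReal_iff (by positivity)] at this
  field_simp at this
  linarith

theorem abs_ncard_hurwitz_mem_fundDomCl_sub_le {q : ℍ} (hq : 8 ≤ ‖q‖) :
    |({p | IsHurwitz p ∧ p * q⁻¹ ∈ fundDomCl}.ncard : ℝ) - ‖q‖ ^ 4| ≤ 48 * ‖q‖ ^ 3 := by
  obtain ⟨hlower, hupper⟩ := ncard_hurwitz_mem_fundDomCl_bounds hq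
  rw [abs_le]
  constructor <;> nlinarith [pow_pos (by linarith : (0:ℝ) < ‖q‖) 2]

/-- The number of Hurwitz integers `p` with `p * q⁻¹ ∈ Δ̄` is asymptotic to `‖q‖⁴`,
and in particular is bounded above and below by constant multiples of `‖q‖⁴`
for `‖q‖` large. -/
theorem card_hurwitz_rationals_in_fundDomCl :
    (∀ ε : ℝ, 0 < ε → ∃ M : ℝ, ∀ q : Quaternion ℝ, IsHurwitz q → q ≠ 0 → M ≤ ‖q‖ →
      |(({p : Quaternion ℝ | IsHurwitz p ∧ p * q⁻¹ ∈ fundDomCl}.ncard : ℝ) / ‖q‖ ^ 4) - 1|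
        < ε) ∧
    ∃ c C : ℝ, 0 < c ∧ 0 < C ∧ ∃ M : ℝ, ∀ q : Quaternion ℝ, IsHurwitz q → q ≠ 0 → M ≤ ‖q‖ →
      c * ‖q‖ ^ 4 ≤ ({p : Quaternion ℝ | IsHurwitz p ∧ p * q⁻¹ ∈ fundDomCl}.ncard : ℝ) ∧
      ({p : Quaternion ℝ | IsHurwitz p ∧ p * q⁻¹ ∈ fundDomCl}.ncard : ℝ) ≤ C * ‖q‖ ^ 4 := by
  refine ⟨fun ε hε => ⟨max 8 (96 / ε), fun q _ _ hM => ?_⟩,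
    1/2, 3/2, by norm_num, by norm_num, 96, fun q _ _ hM => ?_⟩
  · have hr : 8 ≤ ‖q‖ := (le_max_left _ _).trans hM
    have hεr : 96 ≤ ε * ‖q‖ := (div_le_iff₀' hε).1 ((le_max_right _ _).trans hM)
    have hr4 : 0 < ‖q‖ ^ 4 := by positivity
    rw [div_sub_one hr4.ne', abs_div, abs_of_pos hr4, div_lt_iff₀ hr4]
    calc _ ≤ 48 * ‖q‖ ^ 3 := abs_ncard_hurwitz_mem_fundDomCl_sub_le hr
      _ < ε * ‖q‖ ^ 4 := by nlinarith [pow_pos (by linarith : (0:ℝ) < ‖q‖) 3]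
  · have := abs_le.1 (abs_ncard_hurwitz_mem_fundDomCl_sub_le (q := q) (by linarith))
    constructor <;> nlinarith [pow_pos (by linarith : (0:ℝ) < ‖q‖) 3]
end

section
/- For v > 2 and s > 8/v, the set 𝒲_v of quaternions ξ satisfying |ξ − p·q⁻¹|₂ < |q|₂^{-v} for infinitely many Hurwitz integer pairs (p,q), q ≠ 0, has Hausdorff s-measure zero; consequently dim_H(𝒲_v) ≤ 8/v. -/
open MeasureTheory Metric Filter Set Quaternion

/-- The set of `v`-approximable quaternions. -/
def WvSet (v : ℝ) : Set (Quaternion ℝ) :=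
  {ξ | {pq : Quaternion ℝ × Quaternion ℝ | IsHurwitz pq.1 ∧ IsHurwitz pq.2 ∧ pq.2 ≠ 0 ∧
    ‖ξ - pq.1 * pq.2⁻¹‖ < ‖pq.2‖ ^ (-v)}.Infinite}

/-!
If `‖ξ‖ ≤ R`, every approximation `p q⁻¹` of `ξ` has `‖p‖ ≤ (R + 1) ‖q‖`, because a nonzero
Hurwitz integer has norm at least `1`. So `ξ` lies in infinitely many balls
`B(p q⁻¹, ‖q‖⁻ᵛ)` with `‖(p, q)‖ = max ‖p‖ ‖q‖ ≤ (R + 1) ‖q‖`, and the `s`-th powers of their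
diameters are `O(‖(p, q)‖^(-v s))`. The Hurwitz pairs lie in the rank-`8` lattice `(½ℤ)⁸ ⊂ ℍ²`,
so the sum of these powers converges once `v s > 8`, and the Hausdorff–Cantelli lemma
(points lying in infinitely many sets whose diameters have summable `s`-th powers form a
`μH[s]`-null set) gives `μH[s] (WvSet v) = 0`. Letting `s ↓ 8 / v` bounds the dimension.
-/

open Module
open scoped ENNReal Topology

theorem hausdorffMeasure_setOf_infinite_mem_eq_zero {X ι : Type*} [EMetricSpace X]
    [MeasurableSpace X] [BorelSpace X] [Countable ι] {s : ℝ} (hs : 0 < s) (B : ι → Set X)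
    (hB : ∑' i, ediam (B i) ^ s ≠ ∞) :
    μH[s] {x | {i | x ∈ B i}.Infinite} = 0 := by
  have htail : Tendsto (fun F : Finset ι ↦ ∑' i : {i // i ∉ F}, ediam (B i) ^ s) atTop (𝓝 0) :=
    ENNReal.tendsto_tsum_compl_atTop_zero hB
  have hr := (ENNReal.continuous_rpow_const (y := s⁻¹).tendsto 0).comp htail
  rw [ENNReal.zero_rpow_of_pos (inv_pos.2 hs)] at hr
  refine le_antisymm ?_ bot_le
  refine (Measure.hausdorffMeasure_le_liminf_tsum (ι := fun F : Finset ι ↦ {i // i ∉ F}) s _ _ hr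
    (fun _ i ↦ B i) (.of_forall fun _ i ↦ (ENNReal.le_rpow_inv_iff hs).2 (ENNReal.le_tsum i))
    (.of_forall fun F x hx ↦ ?_)).trans_eq htail.liminf_eq
  obtain ⟨i, hi, hiF⟩ := Set.Infinite.exists_notMem_finset hx F
  exact mem_iUnion.2 ⟨⟨i, hiF⟩, hi⟩

theorem dimH_le_ofReal_of_hausdorffMeasure_eq_zero {X : Type*} [EMetricSpace X]
    [MeasurableSpace X] [BorelSpace X] {s : Set X} {D : ℝ} (h : ∀ d, D < d → μH[d] s = 0) :
    dimH s ≤ ENNReal.ofReal D := by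
  refine dimH_le fun d hd ↦ le_of_not_gt fun hlt ↦ ?_
  rw [← ENNReal.ofReal_coe_nnreal, ENNReal.ofReal_lt_ofReal_iff'] at hlt
  simp [h d hlt.1] at hd

theorem norm_le_mul_of_norm_sub_mul_inv_le_one {𝕜 : Type*} [NormedDivisionRing 𝕜] {ξ p q : 𝕜}
    (hq : q ≠ 0) (h : ‖ξ - p * q⁻¹‖ ≤ 1) : ‖p‖ ≤ (‖ξ‖ + 1) * ‖q‖ := by
  have hpq : ‖p * q⁻¹‖ ≤ ‖ξ‖ + 1 :=
    calc ‖p * q⁻¹‖ = ‖ξ - (ξ - p * q⁻¹)‖ := by rw [sub_sub_cancel]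
      _ ≤ ‖ξ‖ + ‖ξ - p * q⁻¹‖ := norm_sub_le _ _
      _ ≤ ‖ξ‖ + 1 := by gcongr
  calc ‖p‖ = ‖p * q⁻¹‖ * ‖q‖ := by rw [← norm_mul, inv_mul_cancel_right₀ hq]
    _ ≤ (‖ξ‖ + 1) * ‖q‖ := by gcongr

theorem Real.rpow_neg_le_mul_rpow_neg {x y K t : ℝ} (hx : 0 < x) (hxy : x ≤ y) (hyK : y ≤ K * x)
    (ht : 0 ≤ t) : x ^ (-t) ≤ K ^ t * y ^ (-t) := by
  have hK : 0 < K := pos_of_mul_pos_left (hx.trans_le (hxy.trans hyK)) hx.le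
  calc x ^ (-t) = K ^ t * (K * x) ^ (-t) := by
        rw [Real.mul_rpow hK.le hx.le, Real.rpow_neg hK.le, mul_inv_cancel_left₀]
        exact (Real.rpow_pos_of_pos hK t).ne'
    _ ≤ K ^ t * y ^ (-t) := mul_le_mul_of_nonneg_left
        (Real.rpow_le_rpow_of_nonpos (hx.trans_le hxy) hyK (neg_nonpos.2 ht)) (by positivity)

lemma IsHurwitz.one_le_norm_s7 {q : ℍ[ℝ]} (hq : IsHurwitz q) (hq0 : q ≠ 0) : 1 ≤ ‖q‖ := by
  suffices 1 ≤ normSq q by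
    rw [normSq_eq_norm_mul_self] at this
    nlinarith [norm_nonneg q]
  rcases hq with ⟨a, b, c, d, ha, hb, hc, hd⟩ | ⟨a, b, c, d, ha, hb, hc, hd⟩
  · have hN : ((a ^ 2 + b ^ 2 + c ^ 2 + d ^ 2 : ℤ) : ℝ) = normSq q := by
      rw [normSq_def', ha, hb, hc, hd]; push_cast; ring
    have hN0 : a ^ 2 + b ^ 2 + c ^ 2 + d ^ 2 ≠ 0 := by
      rintro h
      rw [h, Int.cast_zero, eq_comm, normSq_eq_zero] at hN
      exact hq0 hN
    rw [← hN]
    exact_mod_cast Order.one_le_iff_pos.2 (lt_of_le_of_ne (by positivity) hN0.symm)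
  · -- `(n + 1/2)² = n (n + 1) + 1/4` and `n (n + 1) ≥ 0` for every integer `n`
    have key (n : ℤ) : (1 / 4 : ℝ) ≤ (n + 1 / 2) ^ 2 := by
      have : (0 : ℝ) ≤ n * (n + 1) := by
        exact_mod_cast (show 0 ≤ n * (n + 1) by rcases le_or_gt 0 n with h | h <;> nlinarith)
      nlinarith
    rw [normSq_def', ha, hb, hc, hd]
    linarith [key a, key b, key c, key d]

/-- The basis `½, ½i, ½j, ½k`, so that the Hurwitz integers have integral coordinates. -/
noncomputable def halfBasis : Basis (Fin 4) ℝ ℍ[ℝ] :=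
  .ofEquivFun <| (linearIsometryEquivTuple.toLinearEquiv.trans (WithLp.linearEquiv 2 ℝ _)).trans
    (LinearEquiv.smulOfNeZero ℝ _ 2 two_ne_zero)

lemma halfBasis_repr (x : ℍ[ℝ]) (i : Fin 4) :
    halfBasis.repr x i = 2 * ![x.re, x.imI, x.imJ, x.imK] i := by
  simp [halfBasis]

lemma IsHurwitz.halfBasis_repr_mem {x : ℍ[ℝ]} (hx : IsHurwitz x) (i : Fin 4) :
    halfBasis.repr x i ∈ range (algebraMap ℤ ℝ) := by
  rcases hx with ⟨a, b, c, d, ha, hb, hc, hd⟩ | ⟨a, b, c, d, ha, hb, hc, hd⟩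
  · refine ⟨![2 * a, 2 * b, 2 * c, 2 * d] i, ?_⟩
    fin_cases i <;> simp [halfBasis_repr, ha, hb, hc, hd]
  · refine ⟨![2 * a + 1, 2 * b + 1, 2 * c + 1, 2 * d + 1] i, ?_⟩
    fin_cases i <;> simp [halfBasis_repr, ha, hb, hc, hd] <;> ring

noncomputable abbrev halfIntLattice : Submodule ℤ (ℍ[ℝ] × ℍ[ℝ]) :=
  Submodule.span ℤ (range (halfBasis.prod halfBasis))

lemma finrank_halfIntLattice : finrank ℤ halfIntLattice = 8 := by
  rw [halfIntLattice, finrank_span_eq_card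
    ((halfBasis.prod halfBasis).linearIndependent.restrict_scalars' ℤ)]
  simp

lemma mk_mem_halfIntLattice {p q : ℍ[ℝ]} (hp : IsHurwitz p) (hq : IsHurwitz q) :
    (p, q) ∈ halfIntLattice := by
  refine ((halfBasis.prod halfBasis).mem_span_iff_repr_mem ℤ _).2 fun i ↦ ?_
  rcases i with i | i
  · simpa only [Basis.prod_repr_inl] using hp.halfBasis_repr_mem i
  · simpa only [Basis.prod_repr_inr] using hq.halfBasis_repr_mem i

def hurwitzPairsBelow (K : ℝ) : Set (ℍ[ℝ] × ℍ[ℝ]) :=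
  {z | IsHurwitz z.1 ∧ IsHurwitz z.2 ∧ z.2 ≠ 0 ∧ ‖z.1‖ ≤ K * ‖z.2‖}

lemma hurwitzPairsBelow_subset_halfIntLattice (K : ℝ) :
    hurwitzPairsBelow K ⊆ halfIntLattice :=
  fun _ hz ↦ mk_mem_halfIntLattice hz.1 hz.2.1

instance (K : ℝ) : Countable (hurwitzPairsBelow K) :=
  ((countable_coe_iff.1 (inferInstanceAs (Countable halfIntLattice))).mono
    (hurwitzPairsBelow_subset_halfIntLattice K)).to_subtype

lemma summable_norm_rpow_hurwitzPairsBelow (K : ℝ) {t : ℝ} (ht : 8 < t) :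
    Summable fun z : hurwitzPairsBelow K ↦ ‖(z : ℍ[ℝ] × ℍ[ℝ])‖ ^ (-t) := by
  have hL := ZLattice.summable_norm_rpow halfIntLattice (-t)
    (by rw [finrank_halfIntLattice]; push_cast; linarith)
  let f : hurwitzPairsBelow K → halfIntLattice :=
    fun z ↦ ⟨z, hurwitzPairsBelow_subset_halfIntLattice K z.2⟩
  exact hL.comp_injective (i := f) fun _ _ h ↦ Subtype.ext (Subtype.ext_iff.1 h :)

def approxBall {𝕜 : Type*} [NormedDivisionRing 𝕜] (v : ℝ) (z : 𝕜 × 𝕜) : Set 𝕜 :=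
  ball (z.1 * z.2⁻¹) (‖z.2‖ ^ (-v))

lemma ediam_approxBall_rpow_le {𝕜 : Type*} [NormedDivisionRing 𝕜] {v s K : ℝ} {z : 𝕜 × 𝕜}
    (hK : 1 ≤ K) (hs : 0 ≤ s) (hvs : 0 ≤ v * s) (hz : z.2 ≠ 0) (hzK : ‖z.1‖ ≤ K * ‖z.2‖) :
    ediam (approxBall v z) ^ s ≤ ENNReal.ofReal (2 ^ s * K ^ (v * s) * ‖z‖ ^ (-(v * s))) := by
  have hdiam : ediam (approxBall v z) ≤ ENNReal.ofReal (2 * ‖z.2‖ ^ (-v)) := by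
    rw [approxBall, ← eball_ofReal, ENNReal.ofReal_mul zero_le_two, ENNReal.ofReal_ofNat]
    exact ediam_eball_le
  have hnorm : ‖z.2‖ ^ (-(v * s)) ≤ K ^ (v * s) * ‖z‖ ^ (-(v * s)) :=
    Real.rpow_neg_le_mul_rpow_neg (norm_pos_iff.2 hz) (norm_snd_le z)
      (max_le hzK (le_mul_of_one_le_left (norm_nonneg _) hK)) hvs
  calc ediam (approxBall v z) ^ s ≤ ENNReal.ofReal (2 * ‖z.2‖ ^ (-v)) ^ s := by gcongr
    _ = ENNReal.ofReal (2 ^ s * ‖z.2‖ ^ (-(v * s))) := by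
        rw [ENNReal.ofReal_rpow_of_nonneg (by positivity) hs,
          Real.mul_rpow zero_le_two (by positivity), ← Real.rpow_mul (norm_nonneg _), neg_mul]
    _ ≤ ENNReal.ofReal (2 ^ s * K ^ (v * s) * ‖z‖ ^ (-(v * s))) := by
        rw [mul_assoc]; gcongr

lemma tsum_ediam_approxBall_rpow_ne_top {v s K : ℝ} (hK : 1 ≤ K) (hs : 0 ≤ s) (hvs : 8 < v * s) :
    ∑' z : hurwitzPairsBelow K, ediam (approxBall v (z : ℍ[ℝ] × ℍ[ℝ])) ^ s ≠ ∞ := by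
  have hsum := (summable_norm_rpow_hurwitzPairsBelow K hvs).mul_left (2 ^ s * K ^ (v * s))
  rw [← lt_top_iff_ne_top]
  calc ∑' z : hurwitzPairsBelow K, ediam (approxBall v (z : ℍ[ℝ] × ℍ[ℝ])) ^ s
      ≤ ∑' z : hurwitzPairsBelow K,
          ENNReal.ofReal (2 ^ s * K ^ (v * s) * ‖(z : ℍ[ℝ] × ℍ[ℝ])‖ ^ (-(v * s))) :=
        ENNReal.tsum_le_tsum fun z ↦
          ediam_approxBall_rpow_le hK hs (by linarith) z.2.2.2.1 z.2.2.2.2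
    _ = ENNReal.ofReal (∑' z : hurwitzPairsBelow K,
          2 ^ s * K ^ (v * s) * ‖(z : ℍ[ℝ] × ℍ[ℝ])‖ ^ (-(v * s))) :=
        (ENNReal.ofReal_tsum_of_nonneg (fun _ ↦ by positivity) hsum).symm
    _ < ∞ := ENNReal.ofReal_lt_top

lemma WvSet_subset_iUnion {v : ℝ} (hv : 0 ≤ v) :
    WvSet v ⊆ ⋃ n : ℕ,
      {ξ | {z : hurwitzPairsBelow (n + 1) | ξ ∈ approxBall v (z : ℍ[ℝ] × ℍ[ℝ])}.Infinite} := by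
  intro ξ hξ
  refine mem_iUnion.2 ⟨⌈‖ξ‖⌉₊, Set.Infinite.of_image Subtype.val (hξ.mono ?_)⟩
  rintro ⟨p, q⟩ ⟨hp, hq, hq0, happ⟩
  have happ_le_one : ‖ξ - p * q⁻¹‖ ≤ 1 := happ.le.trans
    (Real.rpow_le_one_of_one_le_of_nonpos (hq.one_le_norm_s7 hq0) (neg_nonpos.2 hv))
  refine ⟨⟨(p, q), hp, hq, hq0, ?_⟩, by simpa [approxBall, dist_eq_norm] using happ, rfl⟩
  calc ‖p‖ ≤ (‖ξ‖ + 1) * ‖q‖ := norm_le_mul_of_norm_sub_mul_inv_le_one hq0 happ_le_one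
    _ ≤ (⌈‖ξ‖⌉₊ + 1) * ‖q‖ := by gcongr; exact Nat.le_ceil _

lemma hausdorffMeasure_WvSet_eq_zero {v s : ℝ} (hv : 0 < v) (hs : 8 / v < s) :
    μH[s] (WvSet v) = 0 := by
  have hvs : 8 < v * s := by rwa [div_lt_iff₀' hv] at hs
  have hs0 : 0 < s := (div_pos (by norm_num) hv).trans hs
  refine measure_mono_null (WvSet_subset_iUnion hv.le) (measure_iUnion_null fun n ↦ ?_)
  exact hausdorffMeasure_setOf_infinite_mem_eq_zero hs0 _
    (tsum_ediam_approxBall_rpow_ne_top (by simp) hs0.le hvs)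

/-- Upper bound part of the quaternionic Jarník–Besicovitch theorem. -/
theorem quaternionic_JB_upper (v s : ℝ) (hv : 2 < v) (hs : 8 / v < s) :
    μH[s] (WvSet v) = 0 ∧ dimH (WvSet v) ≤ ENNReal.ofReal (8 / v) := by
  have hv0 : 0 < v := by linarith
  exact ⟨hausdorffMeasure_WvSet_eq_zero hv0 hs, dimH_le_ofReal_of_hausdorffMeasure_eq_zero
    fun _ hd ↦ hausdorffMeasure_WvSet_eq_zero hv0 hd⟩
end

section
/- Let (B_i) be a sequence of balls in ℝⁿ with |B_i| → 0, and let U_i ⊆ B_i be Lebesgue measurable sets such that |U_i| ≥ c|B_i| for some constant c > 0 and all i. Then the limsup sets satisfy |limsup_i U_i| = |limsup_i B_i|. -/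
open MeasureTheory Metric Filter Set

open Module
open scoped ENNReal Topology

/-!
Fix `N` and let `S` be the set of points of `limsup Bᵢ` lying in no `Uᵢ` with `i ≥ N`; the union of
these sets over `N` contains `limsup Bᵢ \ limsup Uᵢ`. A point `y ∈ S` lies in balls `Bᵢ = B(xᵢ, rᵢ)`
with `i ≥ N` and, since `|Bᵢ| → 0`, with `rᵢ` arbitrarily small. The ball `B̄(y, 2rᵢ)` contains
`Uᵢ`, which is disjoint from `S` and fills at least the proportion `c / 2ⁿ` of it. So no point
of `S` is a Lebesgue density point of `S`, and the density theorem forces `|S| = 0`.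
-/

theorem measure_eq_zero_of_frequently_disjoint_of_le_measure {β : Type*} [MetricSpace β]
    [MeasurableSpace β] [BorelSpace β] [SecondCountableTopology β] [HasBesicovitchCovering β]
    (μ : Measure β) [IsLocallyFiniteMeasure μ] {s : Set β} (hs : MeasurableSet s)
    {ε : ℝ≥0∞} (hε : ε ≠ 0)
    (hole : ∀ x ∈ s, ∃ᶠ ρ in 𝓝[>] 0,
      ∃ t ⊆ closedBall x ρ, Disjoint s t ∧ ε * μ (closedBall x ρ) ≤ μ t) :
    μ s = 0 := by
  have : ∀ᵐ x ∂μ.restrict s, False := by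
    filter_upwards [Besicovitch.ae_tendsto_measure_inter_div μ s, ae_restrict_mem hs]
      with x hdensity hx
    have hdense : ∀ᶠ ρ in 𝓝[>] 0, 1 - ε < μ (s ∩ closedBall x ρ) / μ (closedBall x ρ) :=
      hdensity.eventually <|
        eventually_gt_nhds (ENNReal.sub_lt_self ENNReal.one_ne_top one_ne_zero hε)
    have hfinite : ∀ᶠ ρ in 𝓝[>] 0, μ (closedBall x ρ) < ∞ :=
      (Besicovitch.tendsto_filterAt μ x).eventually
        ((Besicovitch.vitaliFamily μ).eventually_measure_lt_top x)
    obtain ⟨ρ, ⟨hρ, hρ_fin⟩, t, htB, hst, hεt⟩ :=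
      ((hdense.and hfinite).and_frequently (hole x hx)).exists
    have hsum : μ (s ∩ closedBall x ρ) + ε * μ (closedBall x ρ) ≤ μ (closedBall x ρ) :=
      calc μ (s ∩ closedBall x ρ) + ε * μ (closedBall x ρ)
          ≤ μ (s ∩ closedBall x ρ) + μ t := by gcongr
        _ = μ ((s ∩ closedBall x ρ) ∪ t) :=
          (measure_union' (hst.mono_left inter_subset_left)
            (hs.inter measurableSet_closedBall)).symm
        _ ≤ μ (closedBall x ρ) := measure_mono (union_subset inter_subset_right htB)
    have hle : μ (s ∩ closedBall x ρ) ≤ (1 - ε) * μ (closedBall x ρ) := by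
      rw [ENNReal.sub_mul fun _ _ => hρ_fin.ne, one_mul]
      exact ENNReal.le_sub_of_add_le_right
        (ne_top_of_le_ne_top hρ_fin.ne (le_add_self.trans hsum)) hsum
    exact hρ.not_ge (ENNReal.div_le_of_le_mul hle)
  rwa [eventually_false_iff_eq_bot, ae_eq_bot, Measure.restrict_eq_zero] at this

section AddHaar

variable {E : Type*} [NormedAddCommGroup E] [MeasurableSpace E] [BorelSpace E]
  (μ : Measure E) [μ.IsAddHaarMeasure]

theorem eventually_lt_of_tendsto_addHaar_ball {ι : Type*} {l : Filter ι} {x : ι → E} {r : ι → ℝ}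
    (hvol : Tendsto (fun i => μ (ball (x i) (r i))) l (𝓝 0)) {δ : ℝ} (hδ : 0 < δ) :
    ∀ᶠ i in l, r i < δ := by
  filter_upwards [hvol.eventually (eventually_lt_nhds (measure_ball_pos μ (0 : E) hδ))] with i hi
  by_contra! hδr
  refine hi.not_ge ?_
  rw [← Measure.addHaar_ball_center μ (x i)]
  exact measure_mono (ball_subset_ball hδr)

variable [NormedSpace ℝ E] [FiniteDimensional ℝ E]

theorem addHaar_closedBall_two_mul_of_mem_ball {x y : E} {r : ℝ} (hy : y ∈ ball x r) :
    μ (closedBall y (2 * r)) = 2 ^ finrank ℝ E * μ (ball x r) := by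
  have hr : 0 < r := pos_of_mem_ball hy
  rw [Measure.addHaar_closedBall μ y (by positivity), Measure.addHaar_ball_of_pos μ x hr, mul_pow,
    ENNReal.ofReal_mul (by positivity), ← mul_assoc, ENNReal.ofReal_pow zero_le_two,
    ENNReal.ofReal_ofNat]

theorem limsup_ae_eq_limsup_ball_of_le_measure {x : ℕ → E} {r : ℕ → ℝ} {U : ℕ → Set E}
    {c : ℝ≥0∞} (hc : c ≠ 0) (hvol : Tendsto (fun i => μ (ball (x i) (r i))) atTop (𝓝 0))
    (hUB : ∀ i, U i ⊆ ball (x i) (r i)) (hUm : ∀ i, MeasurableSet (U i))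
    (hlb : ∀ i, c * μ (ball (x i) (r i)) ≤ μ (U i)) :
    (limsup U atTop : Set E) =ᵐ[μ] (limsup (fun i => ball (x i) (r i)) atTop : Set E) := by
  let S : ℕ → Set E := fun N => limsup (fun i => ball (x i) (r i)) atTop ∩ ⋂ i ≥ N, (U i)ᶜ
  have hS : ∀ N, μ (S N) = 0 := by
    intro N
    refine measure_eq_zero_of_frequently_disjoint_of_le_measure μ (ε := c / 2 ^ finrank ℝ E)
      ((MeasurableSet.measurableSet_limsup fun i => measurableSet_ball).inter
        (.iInter fun i => .iInter fun _ => (hUm i).compl))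
      (ENNReal.div_pos hc (by simp)).ne' fun y hy => ?_
    refine (nhdsGT_basis 0).frequently_iff.2 fun δ hδ => ?_
    obtain ⟨i, hyB, hNi, hrδ⟩ := ((mem_limsup_iff_frequently_mem.1 hy.1).and_eventually
      ((eventually_ge_atTop N).and
        (eventually_lt_of_tendsto_addHaar_ball μ hvol (half_pos hδ)))).exists
    have hyx : dist y (x i) < r i := hyB
    refine ⟨2 * r i, ⟨by linarith [pos_of_mem_ball hyB], by linarith⟩, U i, ?_, ?_, ?_⟩
    · refine (hUB i).trans <| (ball_subset_ball' ?_).trans ball_subset_closedBall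
      rw [dist_comm]
      linarith
    · exact disjoint_left.2 fun z hz => mem_iInter₂.1 hz.2 i hNi
    · rw [addHaar_closedBall_two_mul_of_mem_ball μ hyB, ← mul_assoc,
        ENNReal.div_mul_cancel (by simp) (by simp)]
      exact hlb i
  have hdiff : limsup (fun i => ball (x i) (r i)) atTop \ limsup U atTop ⊆ ⋃ N, S N := by
    intro y hy
    obtain ⟨N, hN⟩ := eventually_atTop.1 <|
      not_frequently.1 (mt mem_limsup_iff_frequently_mem.2 hy.2)
    exact mem_iUnion.2 ⟨N, hy.1, mem_iInter₂.2 hN⟩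
  exact (limsup_le_limsup (.of_forall hUB)).eventuallyLE.antisymm <|
    ae_le_set.2 (measure_mono_null hdiff (measure_iUnion_null hS))

end AddHaar

/-- If `U i ⊆ B i` are measurable sets occupying a fixed proportion of the measure of
balls `B i` whose measures tend to zero, then the limsup sets of the `U i` and of the
`B i` have the same Lebesgue measure. -/
theorem limsup_measure_eq_of_proportional (n : ℕ)
    (x : ℕ → EuclideanSpace ℝ (Fin n)) (r : ℕ → ℝ)
    (U : ℕ → Set (EuclideanSpace ℝ (Fin n))) (c : ℝ) (hc : 0 < c)
    (hvol : Tendsto (fun i => volume (ball (x i) (r i))) atTop (nhds 0))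
    (hUB : ∀ i, U i ⊆ ball (x i) (r i))
    (hUm : ∀ i, MeasurableSet (U i))
    (hlb : ∀ i, ENNReal.ofReal c * volume (ball (x i) (r i)) ≤ volume (U i)) :
    volume (⋂ N : ℕ, ⋃ i : ℕ, ⋃ _ : N ≤ i, U i) =
      volume (⋂ N : ℕ, ⋃ i : ℕ, ⋃ _ : N ≤ i, ball (x i) (r i)) := by
  have hlimsup (V : ℕ → Set (EuclideanSpace ℝ (Fin n))) :
      ⋂ N : ℕ, ⋃ i : ℕ, ⋃ _ : N ≤ i, V i = limsup V atTop :=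
    limsup_eq_iInf_iSup_of_nat.symm
  rw [hlimsup, hlimsup]
  exact measure_congr <| limsup_ae_eq_limsup_ball_of_le_measure volume
    (ENNReal.ofReal_pos.2 hc).ne' hvol hUB hUm hlb
end

section
/- Let F : ℕ → (0,∞) satisfy ∑_{m=1}^∞ F(m) = ∞. Then there exists a decreasing function η : ℕ → [0,1] with η(m) → 0, such that for every α > 0, m·η(m)^α → ∞ as m → ∞, η(2^r) ≤ 2·η(2^{r+1}) for all r ≥ 1, and ∑_{m=1}^∞ F(m)·η(m) = ∞. -/
open Filter Set

/-!
Since `∑ F` diverges, `ℕ` can be cut into blocks `[nᵢ, nᵢ₊₁)` with `n₀ = 1`, `nᵢ₊₁ ≥ 2 nᵢ` and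
`F`-mass `> 1` on each block. Put `η = 1 / (i + 1)` on the `i`-th block. Then `∑ F η` dominates
the harmonic series; `nᵢ ≥ 2 ^ i` gives `m η(m) ^ α ≥ 2 ^ i / (i + 1) ^ α → ∞`; and doubling `m`
moves it forward by at most one block, whence `η(m) ≤ 2 η(2m)`.
-/

/-- The `i` with `n i ≤ m < n (i + 1)` when `n` is strictly monotone and `n 0 ≤ m`
(the search may stop at `m` because `i ≤ n i`); junk value `0` for `m < n 0`. -/
def blockIndex (n : ℕ → ℕ) (m : ℕ) : ℕ := Nat.findGreatest (fun i => n i ≤ m) m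

section BlockIndex

variable {n : ℕ → ℕ} {m : ℕ}

lemma le_blockIndex_iff (hn : StrictMono n) (hm : n 0 ≤ m) {i : ℕ} :
    i ≤ blockIndex n m ↔ n i ≤ m :=
  ⟨fun hi => (hn.monotone hi).trans (Nat.findGreatest_spec (P := fun i => n i ≤ m) m.zero_le hm),
    fun hi => Nat.le_findGreatest (hn.le_apply.trans hi) hi⟩

lemma apply_blockIndex_le (hn : StrictMono n) (hm : n 0 ≤ m) : n (blockIndex n m) ≤ m :=
  (le_blockIndex_iff hn hm).1 le_rfl

lemma lt_apply_blockIndex_succ (hn : StrictMono n) (hm : n 0 ≤ m) :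
    m < n (blockIndex n m + 1) :=
  lt_of_not_ge fun h => (blockIndex n m).lt_irrefl ((le_blockIndex_iff hn hm).2 h)

lemma blockIndex_eq_of_mem_Ico (hn : StrictMono n) {i : ℕ} (h : m ∈ Ico (n i) (n (i + 1))) :
    blockIndex n m = i := by
  have hm : n 0 ≤ m := (hn.monotone i.zero_le).trans h.1
  refine le_antisymm (Nat.le_of_lt_succ ?_) ((le_blockIndex_iff hn hm).2 h.1)
  exact lt_of_not_ge fun hi => (le_blockIndex_iff hn hm).1 hi |>.not_gt h.2

lemma blockIndex_mono : Monotone (blockIndex n) :=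
  fun _ _ hab => Nat.findGreatest_mono (fun _ hi => hi.trans hab) hab

lemma tendsto_blockIndex_atTop (hn : StrictMono n) : Tendsto (blockIndex n) atTop atTop :=
  tendsto_atTop_atTop.2 fun i =>
    ⟨n i, fun _ hm => (le_blockIndex_iff hn ((hn.monotone i.zero_le).trans hm)).2 hm⟩

lemma blockIndex_two_mul_le (hn : StrictMono n) (hdouble : ∀ i, 2 * n i ≤ n (i + 1))
    (hm : n 0 ≤ m) : blockIndex n (2 * m) ≤ blockIndex n m + 1 := by
  by_contra! h
  have h₁ := (le_blockIndex_iff hn (by omega : n 0 ≤ 2 * m) (i := blockIndex n m + 1 + 1)).1 h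
  have h₂ := lt_apply_blockIndex_succ hn hm
  have h₃ := hdouble (blockIndex n m + 1)
  omega

end BlockIndex

lemma two_pow_mul_le_of_two_mul_le {n : ℕ → ℕ} (hdouble : ∀ i, 2 * n i ≤ n (i + 1)) (i : ℕ) :
    2 ^ i * n 0 ≤ n i := by
  induction i with
  | zero => simp
  | succ i ih => rw [pow_succ']; linarith [hdouble i]

lemma strictMono_of_two_mul_le {n : ℕ → ℕ} (h0 : 0 < n 0) (hdouble : ∀ i, 2 * n i ≤ n (i + 1)) :
    StrictMono n :=
  strictMono_nat_of_lt_succ fun i => by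
    have := two_pow_mul_le_of_two_mul_le hdouble i
    have := Nat.one_le_two_pow (n := i)
    have := hdouble i
    nlinarith

lemma exists_two_mul_le_and_lt_sum_Ico {F : ℕ → ℝ} (hF : ∀ m, 0 ≤ F m) (hdiv : ¬ Summable F)
    (a : ℕ) (C : ℝ) :
    ∃ n : ℕ → ℕ, n 0 = a ∧ (∀ i, 2 * n i ≤ n (i + 1)) ∧
      ∀ i, C < ∑ m ∈ Finset.Ico (n i) (n (i + 1)), F m := by
  have hS := (not_summable_iff_tendsto_nat_atTop_of_nonneg hF).1 hdiv
  have hstep : ∀ k, ∃ l, 2 * k ≤ l ∧ C < ∑ m ∈ Finset.Ico k l, F m := fun k => by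
    obtain ⟨l, hl, hkl⟩ := ((hS.eventually_gt_atTop (∑ m ∈ Finset.range k, F m + C)).and
      (eventually_ge_atTop (2 * k))).exists
    refine ⟨l, hkl, ?_⟩
    rw [Finset.sum_Ico_eq_sub _ (by omega)]
    linarith
  choose step hstep_le hstep_sum using hstep
  refine ⟨fun i => step^[i] a, rfl, fun i => ?_, fun i => ?_⟩
  · simpa only [Function.iterate_succ_apply'] using hstep_le _
  · simpa only [Function.iterate_succ_apply'] using hstep_sum _

lemma sum_range_le_sum_Ico_of_le_sum_blocks {f c : ℕ → ℝ} {n : ℕ → ℕ} (hn : Monotone n)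
    (hc : ∀ i, c i ≤ ∑ m ∈ Finset.Ico (n i) (n (i + 1)), f m) (I : ℕ) :
    ∑ i ∈ Finset.range I, c i ≤ ∑ m ∈ Finset.Ico (n 0) (n I), f m := by
  induction I with
  | zero => simp
  | succ I ih =>
    rw [Finset.sum_range_succ, ← Finset.sum_Ico_consecutive _ (hn I.zero_le) (hn I.le_succ)]
    linarith [hc I]

lemma not_summable_of_le_sum_blocks {f c : ℕ → ℝ} {n : ℕ → ℕ} (hf : ∀ m, 0 ≤ f m)
    (hc₀ : ∀ i, 0 ≤ c i) (hn : Monotone n)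
    (hc : ∀ i, c i ≤ ∑ m ∈ Finset.Ico (n i) (n (i + 1)), f m) (hdiv : ¬ Summable c) :
    ¬ Summable f := fun hf_sum =>
  hdiv <| summable_of_sum_range_le hc₀ fun I =>
    (sum_range_le_sum_Ico_of_le_sum_blocks hn hc I).trans (hf_sum.sum_le_tsum _ fun m _ => hf m)

lemma tendsto_two_pow_div_rpow_succ (α : ℝ) :
    Tendsto (fun k : ℕ => (2 : ℝ) ^ k / ((k : ℝ) + 1) ^ α) atTop atTop := by
  have h := (tendsto_exp_mul_div_rpow_atTop α (Real.log 2) (Real.log_pos one_lt_two)).comp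
    (tendsto_atTop_add_const_right _ 1 tendsto_natCast_atTop_atTop)
  refine (h.const_mul_atTop (one_half_pos (α := ℝ))).congr fun k => ?_
  simp only [Function.comp_apply]
  rw [mul_comm, ← Real.rpow_def_of_pos two_pos, Real.rpow_add_one two_ne_zero, Real.rpow_natCast]
  ring

noncomputable def blockWeight (n : ℕ → ℕ) (m : ℕ) : ℝ := ((blockIndex n m : ℝ) + 1)⁻¹

section BlockWeight

variable {n : ℕ → ℕ} {m : ℕ}

lemma blockWeight_mem_Icc : blockWeight n m ∈ Icc (0 : ℝ) 1 := by
  rw [blockWeight]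
  exact ⟨by positivity, inv_le_one_of_one_le₀ (by simp)⟩

lemma blockWeight_antitone : Antitone (blockWeight n) := fun _ _ hab =>
  inv_anti₀ (by positivity) (by exact_mod_cast Nat.add_le_add_right (blockIndex_mono hab) 1)

lemma tendsto_blockWeight_atTop (hn : StrictMono n) : Tendsto (blockWeight n) atTop (nhds 0) :=
  tendsto_inv_atTop_zero.comp <| tendsto_atTop_add_const_right _ 1 <|
    tendsto_natCast_atTop_atTop.comp (tendsto_blockIndex_atTop hn)

lemma blockWeight_le_two_mul_blockWeight_two_mul (hn : StrictMono n)
    (hdouble : ∀ i, 2 * n i ≤ n (i + 1)) (hm : n 0 ≤ m) :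
    blockWeight n m ≤ 2 * blockWeight n (2 * m) := by
  have h : (blockIndex n (2 * m) : ℝ) ≤ blockIndex n m + 1 := by
    exact_mod_cast blockIndex_two_mul_le hn hdouble hm
  rw [blockWeight, blockWeight, inv_eq_one_div, ← div_eq_mul_inv,
    div_le_div_iff₀ (by positivity) (by positivity)]
  linarith

lemma tendsto_natCast_mul_blockWeight_rpow (h0 : 0 < n 0) (hdouble : ∀ i, 2 * n i ≤ n (i + 1))
    (α : ℝ) : Tendsto (fun m : ℕ => (m : ℝ) * blockWeight n m ^ α) atTop atTop := by
  have hn := strictMono_of_two_mul_le h0 hdouble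
  refine tendsto_atTop_mono' _ ?_
    ((tendsto_two_pow_div_rpow_succ α).comp (tendsto_blockIndex_atTop hn))
  filter_upwards [eventually_ge_atTop (n 0)] with m hm
  have h : (2 : ℝ) ^ blockIndex n m ≤ m := by
    exact_mod_cast (Nat.le_mul_of_pos_right _ h0).trans
      ((two_pow_mul_le_of_two_mul_le hdouble _).trans (apply_blockIndex_le hn hm))
  rw [Function.comp_apply, blockWeight, Real.inv_rpow (by positivity), ← div_eq_mul_inv]
  gcongr

lemma not_summable_mul_blockWeight {F : ℕ → ℝ} (hF : ∀ m, 0 ≤ F m) (hn : StrictMono n)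
    (hblock : ∀ i, 1 ≤ ∑ m ∈ Finset.Ico (n i) (n (i + 1)), F m) :
    ¬ Summable (fun m => F m * blockWeight n m) := by
  refine not_summable_of_le_sum_blocks (c := fun i : ℕ => ((i : ℝ) + 1)⁻¹)
    (fun m => mul_nonneg (hF m) blockWeight_mem_Icc.1) (fun i => by positivity) hn.monotone
    (fun i => ?_) (by exact_mod_cast mt (summable_nat_add_iff 1).1 Real.not_summable_natCast_inv)
  have h : ∑ m ∈ Finset.Ico (n i) (n (i + 1)), F m * blockWeight n m
      = (∑ m ∈ Finset.Ico (n i) (n (i + 1)), F m) * ((i : ℝ) + 1)⁻¹ := by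
    rw [Finset.sum_mul]
    refine Finset.sum_congr rfl fun m hm => ?_
    rw [blockWeight, blockIndex_eq_of_mem_Ico hn (Finset.mem_Ico.1 hm)]
  rw [h]
  exact le_mul_of_one_le_left (by positivity) (hblock i)

end BlockWeight

/-- Perturbation of divergent sums: a divergent positive series remains divergent after
multiplication by a suitable slowly decaying function `η`. -/
theorem exists_eta_of_divergent (F : ℕ → ℝ) (hF : ∀ m, 0 < F m)
    (hdiv : ¬ Summable F) :
    ∃ η : ℕ → ℝ, (∀ m, η m ∈ Set.Icc (0 : ℝ) 1) ∧ Antitone η ∧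
      Tendsto η atTop (nhds 0) ∧
      (∀ α : ℝ, 0 < α → Tendsto (fun m : ℕ => (m : ℝ) * η m ^ α) atTop atTop) ∧
      (∀ r : ℕ, 1 ≤ r → η (2 ^ r) ≤ 2 * η (2 ^ (r + 1))) ∧
      ¬ Summable (fun m => F m * η m) := by
  obtain ⟨n, hn0, hdouble, hblock⟩ :=
    exists_two_mul_le_and_lt_sum_Ico (fun m => (hF m).le) hdiv 1 1
  have hn := strictMono_of_two_mul_le (hn0 ▸ one_pos) hdouble
  refine ⟨blockWeight n, fun _ => blockWeight_mem_Icc, blockWeight_antitone,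
    tendsto_blockWeight_atTop hn,
    fun α _ => tendsto_natCast_mul_blockWeight_rpow (hn0 ▸ one_pos) hdouble α,
    fun r _ => ?_, not_summable_mul_blockWeight (fun m => (hF m).le) hn fun i => (hblock i).le⟩
  rw [pow_succ']
  exact blockWeight_le_two_mul_blockWeight_two_mul hn hdouble (hn0 ▸ Nat.one_le_two_pow)
end

section
/- The Hurwitz rationals in Δ̄ form a ubiquitous system with respect to ρ(m) = 2/(η(m)^{1/4} m²): for every ball B₀ ⊆ Δ̄ and all sufficiently large N, the Lebesgue measure of B₀ ∩ ⋃_{1≤|q|₂≤N} ⋃_{p∈𝓗} B(p·q⁻¹, ρ(N)) is at least |B₀|/2. -/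
open MeasureTheory Metric Filter Set Quaternion

/-!
Dirichlet's pigeonhole argument, run with the Lipschitz integers `ℤ⁴ ⊂ 𝓗` as denominators, gives
for every `ξ` and `M ≥ 1` integral `p, q` with `0 < ‖q‖ ≤ 2M` and `‖ξ q - p‖ ≤ 2/M`, hence
`‖ξ - p q⁻¹‖ ≤ 2/(M ‖q‖)`. Take `M = ⌊N/2⌋` and `T = κ N² / M` with `κ = η(N)^{1/4}`. If `‖q‖ > T`
then `ξ` lies within `ρ(N)` of `p q⁻¹`; otherwise `ξ` lies in the union of the balls of radius
`2/(M ‖q‖)` around the `p q⁻¹` with `‖q‖ ≤ T`, and `‖p‖ ≤ 4 ‖q‖` since `‖ξ‖ ≤ 2` on `Δ̄`. There are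
`≪ ‖q‖⁴` such `p` for each of the `≪ T⁴` denominators, so this union has measure `≪ T⁴/M⁴ ≪ η(N)`,
which is less than `|B₀|/2` once `N` is large.
-/

theorem norm_sub_mul_inv_eq {𝕜 : Type*} [NormedDivisionRing 𝕜] (ξ p : 𝕜) {q : 𝕜} (hq : q ≠ 0) :
    ‖ξ - p * q⁻¹‖ = ‖ξ * q - p‖ / ‖q‖ := by
  rw [div_eq_mul_inv, ← norm_inv, ← norm_mul, sub_mul, mul_assoc, mul_inv_cancel₀ hq, mul_one]

theorem half_measure_le_measure_inter {α : Type*} [MeasurableSpace α] {μ : Measure α}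
    {s G B : Set α} (hs : s ⊆ G ∪ B) (hfin : μ s ≠ ⊤) (hB : μ B ≤ μ s / 2) :
    μ s / 2 ≤ μ (s ∩ G) := by
  have hcover : μ s ≤ μ (s ∩ G) + μ s / 2 :=
    calc μ s ≤ μ ((s ∩ G) ∪ B) := measure_mono fun ξ hξ => (hs hξ).imp (⟨hξ, ·⟩) id
      _ ≤ μ (s ∩ G) + μ B := measure_union_le _ _
      _ ≤ μ (s ∩ G) + μ s / 2 := by gcongr
  rw [← ENNReal.sub_half hfin]
  exact tsub_le_iff_right.2 hcover

theorem abs_fract_sub_fract_lt_of_floor_eq {M : ℕ} (hM : 0 < M) {a b : ℝ}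
    (h : ⌊M * Int.fract a⌋₊ = ⌊M * Int.fract b⌋₊) : |Int.fract a - Int.fract b| < 1 / M := by
  have ha := Nat.lt_floor_add_one (M * Int.fract a)
  have hb := Nat.lt_floor_add_one (M * Int.fract b)
  have ha' := Nat.floor_le (mul_nonneg M.cast_nonneg (Int.fract_nonneg a))
  have hb' := Nat.floor_le (mul_nonneg M.cast_nonneg (Int.fract_nonneg b))
  rw [h] at ha ha'
  have hM' : (0 : ℝ) < M := Nat.cast_pos.2 hM
  rw [abs_sub_lt_iff, lt_div_iff₀ hM', lt_div_iff₀ hM']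
  constructor <;> linarith

theorem exists_ne_forall_abs_fract_sub_lt {α ι : Type*} [Fintype α] [Fintype ι] {M : ℕ}
    (hM : 0 < M) (hcard : M ^ Fintype.card ι < Fintype.card α) (y : α → ι → ℝ) :
    ∃ a b, a ≠ b ∧ ∀ i, |Int.fract (y a i) - Int.fract (y b i)| < 1 / M := by
  classical
  let cell : α → ι → Fin M := fun a i =>
    ⟨⌊M * Int.fract (y a i)⌋₊, (Nat.floor_lt (by positivity)).2 <| by
      simpa using mul_lt_mul_of_pos_left (Int.fract_lt_one (y a i)) (Nat.cast_pos.2 hM)⟩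
  obtain ⟨a, b, hab, hcell⟩ := Fintype.exists_ne_map_eq_of_card_lt cell (by simpa using hcard)
  exact ⟨a, b, hab, fun i =>
    abs_fract_sub_fract_lt_of_floor_eq hM (congrArg Fin.val (congrFun hcell i))⟩

namespace Quaternion

noncomputable def coordEquiv : ℍ ≃ₗ[ℝ] (Fin 4 → ℝ) :=
  QuaternionAlgebra.linearEquivTuple (-1) 0 (-1)

theorem coordEquiv_apply (x : ℍ) : coordEquiv x = ![x.re, x.imI, x.imJ, x.imK] := rfl

instance inst_s13 : (volume : Measure ℍ).IsAddHaarMeasure :=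
  coordEquiv.symm.toContinuousLinearEquiv.isAddHaarMeasure_map volume

theorem volume_closedBall_eq (x : ℍ) {ρ : ℝ} (hρ : 0 ≤ ρ) :
    volume (closedBall x ρ) = ENNReal.ofReal (ρ ^ 4) * volume (closedBall (0 : ℍ) 1) := by
  rw [Measure.addHaar_closedBall' volume x hρ, finrank_eq_four]

theorem norm_sq_eq_sum_coordEquiv (x : ℍ) : ‖x‖ ^ 2 = ∑ i, coordEquiv x i ^ 2 := by
  rw [sq, ← normSq_eq_norm_mul_self, normSq_def', Fin.sum_univ_four]
  rfl

theorem abs_coordEquiv_le_norm (x : ℍ) (i : Fin 4) : |coordEquiv x i| ≤ ‖x‖ := by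
  refine (pow_le_pow_iff_left₀ (abs_nonneg _) (norm_nonneg x) two_ne_zero).mp ?_
  rw [sq_abs, norm_sq_eq_sum_coordEquiv]
  exact Finset.single_le_sum (fun j _ => sq_nonneg (coordEquiv x j)) (Finset.mem_univ i)

theorem norm_le_two_mul_of_abs_coordEquiv_le {x : ℍ} {s : ℝ} (h : ∀ i, |coordEquiv x i| ≤ s) :
    ‖x‖ ≤ 2 * s := by
  have hs : 0 ≤ s := (abs_nonneg _).trans (h 0)
  refine (pow_le_pow_iff_left₀ (norm_nonneg x) (by positivity) two_ne_zero).mp ?_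
  calc ‖x‖ ^ 2 = ∑ i, |coordEquiv x i| ^ 2 := by simp only [sq_abs, norm_sq_eq_sum_coordEquiv]
    _ ≤ ∑ _i : Fin 4, s ^ 2 := by gcongr with i; exact h i
    _ = (2 * s) ^ 2 := by
      simp only [Finset.sum_const, Finset.card_univ, Fintype.card_fin, nsmul_eq_mul]
      ring

theorem fundDomCl_subset_closedBall : fundDomCl ⊆ closedBall 0 2 := by
  rintro ξ ⟨h₁, h₂, h₃, h₄, h₅, h₆, h₇, h₈⟩
  rw [mem_closedBall_zero_iff, ← mul_one (2 : ℝ)]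
  refine norm_le_two_mul_of_abs_coordEquiv_le fun i => abs_le.2 ?_
  fin_cases i <;>
    simp only [coordEquiv_apply, Fin.zero_eta, Fin.mk_one, Fin.reduceFinMk, Fin.isValue,
      Matrix.cons_val_zero, Matrix.cons_val_one, Matrix.cons_val] <;>
    constructor <;> linarith

noncomputable def intQuat (v : Fin 4 → ℤ) : ℍ := coordEquiv.symm fun i => (v i : ℝ)

@[simp]
theorem coordEquiv_intQuat (v : Fin 4 → ℤ) : coordEquiv (intQuat v) = fun i => (v i : ℝ) :=
  coordEquiv.apply_symm_apply _

theorem intQuat_sub (v w : Fin 4 → ℤ) : intQuat (v - w) = intQuat v - intQuat w := by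
  simp only [intQuat, Pi.sub_apply, Int.cast_sub, ← map_sub]
  rfl

theorem isHurwitz_intQuat (v : Fin 4 → ℤ) : IsHurwitz (intQuat v) :=
  Or.inl ⟨v 0, v 1, v 2, v 3, rfl, rfl, rfl, rfl⟩

theorem one_le_norm_intQuat {v : Fin 4 → ℤ} (hv : v ≠ 0) : 1 ≤ ‖intQuat v‖ := by
  obtain ⟨i, hi⟩ := Function.ne_iff.mp hv
  calc (1 : ℝ) ≤ |(v i : ℝ)| := by exact_mod_cast Int.one_le_abs hi
    _ ≤ ‖intQuat v‖ := by simpa using abs_coordEquiv_le_norm (intQuat v) i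

theorem exists_intQuat_approx (ξ : ℍ) {M : ℕ} (hM : 0 < M) :
    ∃ p q : Fin 4 → ℤ, q ≠ 0 ∧ ‖intQuat q‖ ≤ 2 * M ∧ ‖ξ * intQuat q - intQuat p‖ ≤ 2 / M := by
  obtain ⟨v, w, hvw, hclose⟩ := exists_ne_forall_abs_fract_sub_lt hM
    (by simpa using Nat.pow_lt_pow_left M.lt_succ_self four_ne_zero)
    fun v : Fin 4 → Fin (M + 1) => coordEquiv (ξ * intQuat fun i => (v i : ℤ))
  refine ⟨fun i => ⌊coordEquiv (ξ * intQuat fun i => (v i : ℤ)) i⌋ -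
      ⌊coordEquiv (ξ * intQuat fun i => (w i : ℤ)) i⌋,
    (fun i => (v i : ℤ)) - fun i => (w i : ℤ), ?_, ?_, ?_⟩
  · intro h
    exact hvw (funext fun i => Fin.ext (by simpa [sub_eq_zero] using congrFun h i))
  · refine norm_le_two_mul_of_abs_coordEquiv_le fun i => ?_
    have h : |((v i : ℕ) : ℤ) - (w i : ℕ)| ≤ M :=
      abs_sub_le_of_nonneg_of_le (by positivity) (by exact_mod_cast (v i).is_le) (by positivity)
        (by exact_mod_cast (w i).is_le)
    simp only [coordEquiv_intQuat, Pi.sub_apply]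
    exact_mod_cast h
  · rw [← mul_one_div]
    refine norm_le_two_mul_of_abs_coordEquiv_le fun i => Eq.trans_le ?_ (hclose i).le
    congr 1
    simp only [intQuat_sub, mul_sub, map_sub, Pi.sub_apply, coordEquiv_intQuat, Int.cast_sub,
      Int.fract]
    ring

noncomputable def intBox (k : ℕ) : Finset (Fin 4 → ℤ) :=
  Fintype.piFinset fun _ => Finset.Icc (-(k : ℤ)) k

theorem card_intBox (k : ℕ) : (intBox k).card = (2 * k + 1) ^ 4 := by
  simp only [intBox, Fintype.card_piFinset, Int.card_Icc, Finset.prod_const, Finset.card_univ,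
    Fintype.card_fin]
  congr 1
  omega

theorem mem_intBox_of_norm_le {v : Fin 4 → ℤ} {T : ℝ} (h : ‖intQuat v‖ ≤ T) :
    v ∈ intBox ⌊T⌋₊ := by
  refine Fintype.mem_piFinset.2 fun i => Finset.mem_Icc.2 (abs_le.1 ?_)
  have hvi : ((v i).natAbs : ℝ) ≤ T := by
    simpa using (abs_coordEquiv_le_norm (intQuat v) i).trans h
  rw [← Int.natCast_natAbs]
  exact_mod_cast Nat.le_floor hvi

def hurwitzApprox (N ρ : ℝ) : Set ℍ :=
  ⋃ q ∈ {q : ℍ | IsHurwitz q ∧ 1 ≤ ‖q‖ ∧ ‖q‖ ≤ N}, ⋃ p ∈ {p : ℍ | IsHurwitz p}, ball (p * q⁻¹) ρ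

noncomputable def smallDenominatorNbhd (M T : ℝ) : Set ℍ :=
  ⋃ v ∈ (intBox ⌊T⌋₊).erase 0, ⋃ u ∈ intBox ⌊4 * ‖intQuat v‖⌋₊,
    closedBall (intQuat u * (intQuat v)⁻¹) (2 / (M * ‖intQuat v‖))

theorem closedBall_two_subset_hurwitzApprox_union {M : ℕ} (hM : 0 < M) {N : ℝ}
    (hMN : 2 * M ≤ N) {ρ T : ℝ} (hT : 0 < T) (hρ : 2 / (M * T) ≤ ρ) :
    closedBall (0 : ℍ) 2 ⊆ hurwitzApprox N ρ ∪ smallDenominatorNbhd M T := by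
  intro ξ hξ
  obtain ⟨p, q, hq0, hqM, happrox⟩ := exists_intQuat_approx ξ hM
  have hq1 := one_le_norm_intQuat hq0
  have hq : intQuat q ≠ 0 := norm_ne_zero_iff.1 (one_pos.trans_le hq1).ne'
  have hM1 : (1 : ℝ) ≤ M := Nat.one_le_cast.2 hM
  have hdist : ‖ξ - intQuat p * (intQuat q)⁻¹‖ ≤ 2 / (M * ‖intQuat q‖) := by
    rw [norm_sub_mul_inv_eq _ _ hq, ← div_div]
    gcongr
  rcases lt_or_ge T ‖intQuat q‖ with hTq | hqT
  · refine Or.inl <| mem_iUnion₂.2 ⟨_, ⟨isHurwitz_intQuat q, hq1, hqM.trans hMN⟩,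
      mem_iUnion₂.2 ⟨_, isHurwitz_intQuat p, ?_⟩⟩
    calc dist ξ _ ≤ 2 / (M * ‖intQuat q‖) := (dist_eq_norm _ _).trans_le hdist
      _ < 2 / (M * T) := by gcongr
      _ ≤ ρ := hρ
  · have hpq : ‖intQuat p * (intQuat q)⁻¹‖ ≤ 4 :=
      calc _ ≤ ‖ξ‖ + ‖ξ - intQuat p * (intQuat q)⁻¹‖ := norm_le_norm_add_norm_sub ξ _
        _ ≤ 2 + 2 := add_le_add (mem_closedBall_zero_iff.1 hξ) <|
          hdist.trans (div_le_self zero_le_two (one_le_mul_of_one_le_of_one_le hM1 hq1))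
        _ = 4 := by norm_num
    have hp : ‖intQuat p‖ ≤ 4 * ‖intQuat q‖ := by
      rw [← inv_mul_cancel_right₀ hq (intQuat p), norm_mul]
      gcongr
    exact Or.inr <| mem_iUnion₂.2 ⟨q, Finset.mem_erase.2 ⟨hq0, mem_intBox_of_norm_le hqT⟩,
      mem_iUnion₂.2 ⟨p, mem_intBox_of_norm_le hp, mem_closedBall_iff_norm.2 hdist⟩⟩

theorem volume_biUnion_le {ι : Type*} (s : Finset ι) (S : ι → Set ℍ) {A : ℝ}
    (h : ∀ i ∈ s, volume (S i) ≤ ENNReal.ofReal A * volume (closedBall (0 : ℍ) 1)) :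
    volume (⋃ i ∈ s, S i) ≤ ENNReal.ofReal (s.card * A) * volume (closedBall (0 : ℍ) 1) :=
  calc volume (⋃ i ∈ s, S i) ≤ ∑ i ∈ s, volume (S i) := measure_biUnion_finset_le s S
    _ ≤ s.card • (ENNReal.ofReal A * volume (closedBall (0 : ℍ) 1)) :=
      Finset.sum_le_card_nsmul _ _ _ h
    _ = _ := by
      rw [nsmul_eq_mul, ENNReal.ofReal_mul (Nat.cast_nonneg _), ENNReal.ofReal_natCast, mul_assoc]

theorem volume_smallDenominatorNbhd_le {M T : ℝ} (hM : 0 < M) (hT : 1 ≤ T) :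
    volume (smallDenominatorNbhd M T) ≤
      ENNReal.ofReal ((54 * T / M) ^ 4) * volume (closedBall (0 : ℍ) 1) := by
  have hballs : ∀ v ∈ (intBox ⌊T⌋₊).erase 0,
      volume (⋃ u ∈ intBox ⌊4 * ‖intQuat v‖⌋₊,
        closedBall (intQuat u * (intQuat v)⁻¹) (2 / (M * ‖intQuat v‖))) ≤
      ENNReal.ofReal ((18 / M) ^ 4) * volume (closedBall (0 : ℍ) 1) := by
    intro v hv
    have hq := one_le_norm_intQuat (Finset.ne_of_mem_erase hv)
    refine (volume_biUnion_le _ _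
      fun u _ => (volume_closedBall_eq _ (by positivity)).le).trans ?_
    gcongr
    have hfloor := Nat.floor_le (show 0 ≤ 4 * ‖intQuat v‖ by positivity)
    rw [card_intBox]
    push_cast
    calc _ = ((2 * ⌊4 * ‖intQuat v‖⌋₊ + 1) * (2 / (M * ‖intQuat v‖))) ^ 4 := by ring
      _ ≤ (9 * ‖intQuat v‖ * (2 / (M * ‖intQuat v‖))) ^ 4 := by gcongr; linarith
      _ = (18 / M) ^ 4 := by field_simp; ring
  refine (volume_biUnion_le _ _ hballs).trans ?_
  gcongr
  have hcard : (((intBox ⌊T⌋₊).erase 0).card : ℝ) ≤ (3 * T) ^ 4 := by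
    have hfloor := Nat.floor_le (zero_le_one.trans hT)
    calc _ ≤ ((intBox ⌊T⌋₊).card : ℝ) := by exact_mod_cast Finset.card_erase_le
      _ = (2 * ⌊T⌋₊ + 1 : ℝ) ^ 4 := by rw [card_intBox]; push_cast; ring
      _ ≤ (3 * T) ^ 4 := by gcongr; linarith
  calc _ ≤ (3 * T) ^ 4 * (18 / M) ^ 4 := by gcongr
    _ = (54 * T / M) ^ 4 := by ring

theorem volume_smallDenominatorNbhd_half_le {N : ℕ} (hN : 2 ≤ N) {κ : ℝ} (hκ : 1 ≤ N * κ) :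
    volume (smallDenominatorNbhd (N / 2 : ℕ) (κ * N ^ 2 / (N / 2 : ℕ))) ≤
      ENNReal.ofReal ((486 * κ) ^ 4) * volume (closedBall (0 : ℍ) 1) := by
  have hM : (0 : ℝ) < (N / 2 : ℕ) := Nat.cast_pos.2 (by omega)
  have hNM : (N : ℝ) ≤ 3 * (N / 2 : ℕ) := by exact_mod_cast (by omega : N ≤ 3 * (N / 2))
  have hMN : (2 * (N / 2 : ℕ) : ℝ) ≤ N := by exact_mod_cast Nat.mul_div_le N 2
  have hκ0 : 0 ≤ κ := by nlinarith
  have hN2 : (N : ℝ) ^ 2 ≤ 9 * (N / 2 : ℕ) ^ 2 := by nlinarith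
  refine (volume_smallDenominatorNbhd_le hM ?_).trans ?_
  · rw [le_div_iff₀ hM]
    nlinarith
  · gcongr
    rw [div_le_iff₀ hM, mul_div_assoc', div_le_iff₀ hM]
    nlinarith

end Quaternion

theorem hurwitz_rationals_ubiquitous_general (η : ℕ → ℝ)
    (hηIcc : ∀ m, η m ∈ Set.Icc (0 : ℝ) 1)
    (hη0 : Tendsto η atTop (nhds 0))
    (hgrow : Tendsto (fun m : ℕ => (m : ℝ) * η m ^ ((1 : ℝ) / 4)) atTop atTop)
    (x : Quaternion ℝ) (r : ℝ) (hr : 0 < r) (hball : closedBall x r ⊆ fundDomCl) :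
    ∃ N₀ : ℕ, ∀ N : ℕ, N₀ ≤ N →
      volume (closedBall x r) / 2 ≤
        volume (closedBall x r ∩
          ⋃ q ∈ {q : Quaternion ℝ | IsHurwitz q ∧ 1 ≤ ‖q‖ ∧ ‖q‖ ≤ N},
            ⋃ p ∈ {p : Quaternion ℝ | IsHurwitz p},
              ball (p * q⁻¹) (2 / (η N ^ ((1 : ℝ) / 4) * (N : ℝ) ^ 2))) := by
  obtain ⟨N₀, hN₀⟩ := eventually_atTop.1 <| (eventually_ge_atTop 2).and <|
    (hgrow.eventually (eventually_ge_atTop 1)).and <|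
      hη0.eventually_lt_const (show 0 < r ^ 4 / (2 * 486 ^ 4) by positivity)
  refine ⟨N₀, fun N hN => ?_⟩
  obtain ⟨hN2, hNκ, hηN⟩ := hN₀ N hN
  set κ := η N ^ ((1 : ℝ) / 4)
  have hκ4 : κ ^ 4 = η N := by
    convert Real.rpow_inv_natCast_pow (hηIcc N).1 four_ne_zero using 3
    norm_num
  have hκ : 0 < κ := pos_of_mul_pos_right (one_pos.trans_le hNκ) (Nat.cast_nonneg N)
  have hM : 0 < N / 2 := by omega
  have hMN : (2 * (N / 2 : ℕ) : ℝ) ≤ N := by exact_mod_cast Nat.mul_div_le N 2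
  refine half_measure_le_measure_inter ((hball.trans fundDomCl_subset_closedBall).trans <|
    closedBall_two_subset_hurwitzApprox_union hM hMN (T := κ * N ^ 2 / (N / 2 : ℕ))
      (by positivity) (le_of_eq (by field_simp))) measure_closedBall_lt_top.ne ?_
  calc _ ≤ ENNReal.ofReal ((486 * κ) ^ 4) * volume (closedBall (0 : ℍ) 1) :=
        volume_smallDenominatorNbhd_half_le hN2 hNκ
    _ ≤ ENNReal.ofReal (r ^ 4 / 2) * volume (closedBall (0 : ℍ) 1) := by
        rw [mul_pow, hκ4]
        gcongr
        nlinarith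
    _ = volume (closedBall x r) / 2 := by
        rw [volume_closedBall_eq x hr.le, ENNReal.ofReal_div_of_pos two_pos, ENNReal.ofReal_ofNat,
          div_eq_mul_inv, div_eq_mul_inv, mul_right_comm]

/-- The Hurwitz rationals form a ubiquitous system in `Δ̄` with respect to
`ρ(N) = 2/(η(N)^{1/4} N²)`: every ball `B₀ ⊆ Δ̄` is at least half covered in measure by
the `ρ(N)`-neighbourhoods of the Hurwitz rationals with denominator of norm at most `N`,
for all sufficiently large `N`. -/
theorem hurwitz_rationals_ubiquitous (η : ℕ → ℝ)
    (hηIcc : ∀ m, η m ∈ Set.Icc (0 : ℝ) 1) (hηanti : Antitone η)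
    (hη0 : Tendsto η atTop (nhds 0))
    (hgrow : Tendsto (fun m : ℕ => (m : ℝ) * η m ^ ((1 : ℝ) / 4)) atTop atTop)
    (x : Quaternion ℝ) (r : ℝ) (hr : 0 < r) (hball : closedBall x r ⊆ fundDomCl) :
    ∃ N₀ : ℕ, ∀ N : ℕ, N₀ ≤ N →
      volume (closedBall x r) / 2 ≤
        volume (closedBall x r ∩
          ⋃ q ∈ {q : Quaternion ℝ | IsHurwitz q ∧ 1 ≤ ‖q‖ ∧ ‖q‖ ≤ N},
            ⋃ p ∈ {p : Quaternion ℝ | IsHurwitz p},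
              ball (p * q⁻¹) (2 / (η N ^ ((1 : ℝ) / 4) * (N : ℝ) ^ 2))) :=
  hurwitz_rationals_ubiquitous_general η hηIcc hη0 hgrow x r hr hball
end
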